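/- arXiv:1901.04539 — 9 statements merged into one kernel-verified Lean document; each statement's English description precedes it below -/
import Mathlib

section
/- Suppose γ ≥ 0 is a constant such that |XY − YX| ≤ γ·|X|·|Y| for all X, Y ∈ 𝔤. Then for every 𝔤-valued 1-form A, the bracket satisfies |[A,A]| ≤ γ·√((n−1)/(2n))·|A|². -/
open Matrix Finset

/-- The inner product `⟨X,Y⟩ = -(1/2)·tr(XY)` on real skew-symmetric `m×m` matrices `𝔤`. -/
noncomputable def gInner {m : ℕ} (X Y : Matrix (Fin m) (Fin m) ℝ) : ℝ :=
  -(1/2) * (X * Y).trace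

/-- The norm `|X| = ⟨X,X⟩^{1/2}` on `𝔤`. -/
noncomputable def gNorm {m : ℕ} (X : Matrix (Fin m) (Fin m) ℝ) : ℝ :=
  Real.sqrt (gInner X X)

/-- The inner product `⟨P,Q⟩ = -(1/2)·Σᵢ tr(Pᵢ Qᵢ)` on `𝔤`-valued 1-forms. -/
noncomputable def oneInner {n m : ℕ} (P Q : Fin n → Matrix (Fin m) (Fin m) ℝ) : ℝ :=
  -(1/2) * ∑ i, (P i * Q i).trace

/-- The norm on `𝔤`-valued 1-forms. -/
noncomputable def oneNorm {n m : ℕ} (A : Fin n → Matrix (Fin m) (Fin m) ℝ) : ℝ :=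
  Real.sqrt (oneInner A A)

/-- The inner product `⟨R,S⟩ = -(1/4)·Σᵢⱼ tr(Rᵢⱼ Sᵢⱼ)` on `𝔤`-valued 2-forms. -/
noncomputable def twoInner {n m : ℕ} (R S : Fin n → Fin n → Matrix (Fin m) (Fin m) ℝ) : ℝ :=
  -(1/4) * ∑ i, ∑ j, (R i j * S i j).trace

/-- The norm on `𝔤`-valued 2-forms. -/
noncomputable def twoNorm {n m : ℕ} (Φ : Fin n → Fin n → Matrix (Fin m) (Fin m) ℝ) : ℝ :=
  Real.sqrt (twoInner Φ Φ)

/-- Action of a real `n×n` matrix `Z` on a `𝔤`-valued 1-form: `(Z(A))ᵢ = Σⱼ Zᵢⱼ Aⱼ`. -/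
noncomputable def zAct {n m : ℕ} (Z : Matrix (Fin n) (Fin n) ℝ)
    (A : Fin n → Matrix (Fin m) (Fin m) ℝ) : Fin n → Matrix (Fin m) (Fin m) ℝ :=
  fun i => ∑ j, Z i j • A j

/-- Action of a `𝔤`-valued 2-form on a `𝔤`-valued 1-form:
`([Φ,A])ᵢ = Σⱼ (Φⱼᵢ Aⱼ − Aⱼ Φⱼᵢ)`. -/
noncomputable def phiAct {n m : ℕ} (Φ : Fin n → Fin n → Matrix (Fin m) (Fin m) ℝ)
    (A : Fin n → Matrix (Fin m) (Fin m) ℝ) : Fin n → Matrix (Fin m) (Fin m) ℝ :=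
  fun i => ∑ j, (Φ j i * A j - A j * Φ j i)

/-- The bracket of 𝔤-valued 1-forms: `[A,B]ᵢⱼ = Aᵢ Bⱼ − Bⱼ Aᵢ`. -/
noncomputable def oneBracket {n m : ℕ} (A B : Fin n → Matrix (Fin m) (Fin m) ℝ) :
    Fin n → Fin n → Matrix (Fin m) (Fin m) ℝ :=
  fun i j => A i * B j - B j * A i

lemma gInner_self_eq {m : ℕ} (X : Matrix (Fin m) (Fin m) ℝ) (hX : Xᵀ = -X) :
    gInner X X = (1/2) * ∑ i, ∑ j, X i j ^ 2 := by
  have hx : ∀ i j : Fin m, X j i = -X i j := fun i j => by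
    have := congrFun (congrFun hX i) j
    simpa using this
  unfold gInner
  rw [Matrix.trace]
  simp only [Matrix.diag_apply, Matrix.mul_apply]
  have key : ∑ i, ∑ j, X i j * X j i = -∑ i, ∑ j, X i j ^ 2 := by
    rw [← Finset.sum_neg_distrib]
    refine Finset.sum_congr rfl fun i _ => ?_
    rw [← Finset.sum_neg_distrib]
    refine Finset.sum_congr rfl fun j _ => ?_
    rw [hx i j]; ring
  rw [key]; ring

lemma gInner_self_nonneg {m : ℕ} (X : Matrix (Fin m) (Fin m) ℝ) (hX : Xᵀ = -X) :
    0 ≤ gInner X X := by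
  rw [gInner_self_eq X hX]
  positivity

lemma gNorm_sq {m : ℕ} (X : Matrix (Fin m) (Fin m) ℝ) (hX : Xᵀ = -X) :
    gNorm X ^ 2 = gInner X X :=
  Real.sq_sqrt (gInner_self_nonneg X hX)

lemma comm_skew {m : ℕ} (X Y : Matrix (Fin m) (Fin m) ℝ) (hX : Xᵀ = -X) (hY : Yᵀ = -Y) :
    (X * Y - Y * X)ᵀ = -(X * Y - Y * X) := by
  simp [Matrix.transpose_sub, Matrix.transpose_mul, hX, hY, neg_sub]

/-- If `γ ≥ 0` satisfies `|XY − YX| ≤ γ·|X|·|Y|` for all `X, Y ∈ 𝔤`, then for every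
`𝔤`-valued 1-form `A`, `|[A,A]| ≤ γ·√((n−1)/(2n))·|A|²`. -/
theorem bracket_self_norm_le (m n : ℕ) (hm : 1 ≤ m) (hn : 1 ≤ n) (γ : ℝ) (hγ : 0 ≤ γ)
    (hbd : ∀ X Y : Matrix (Fin m) (Fin m) ℝ, Xᵀ = -X → Yᵀ = -Y →
      gNorm (X * Y - Y * X) ≤ γ * gNorm X * gNorm Y)
    (A : Fin n → Matrix (Fin m) (Fin m) ℝ) (hA : ∀ i, (A i)ᵀ = -(A i)) :
    twoNorm (oneBracket A A) ≤ γ * Real.sqrt (((n : ℝ) - 1) / (2 * n)) * oneNorm A ^ 2 := by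
  set b : Fin n → ℝ := fun i => gInner (A i) (A i) with hbdef
  have hb0 : ∀ i, 0 ≤ b i := fun i => gInner_self_nonneg _ (hA i)
  set S : ℝ := ∑ i, b i with hSdef
  have hS0 : 0 ≤ S := Finset.sum_nonneg fun i _ => hb0 i
  have hn0 : (0:ℝ) < n := by exact_mod_cast hn
  have hc0 : 0 ≤ ((n : ℝ) - 1) / (2 * n) := by
    apply div_nonneg
    · have : (1:ℝ) ≤ n := by exact_mod_cast hn
      linarith
    · linarith
  -- oneInner A A = S
  have hone : oneInner A A = S := by
    unfold oneInner
    rw [hSdef, hbdef]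
    unfold gInner
    rw [Finset.mul_sum]
  have honeSq : oneNorm A ^ 2 = S := by
    unfold oneNorm
    rw [hone]
    exact Real.sq_sqrt hS0
  -- per-term bound
  have hterm : ∀ i j : Fin n, gInner (oneBracket A A i j) (oneBracket A A i j) ≤
      (if i = j then 0 else γ ^ 2 * b i * b j) := by
    intro i j
    by_cases hij : i = j
    · subst hij
      simp [oneBracket, gInner]
    · simp only [hij, if_false]
      have h1 := hbd (A i) (A j) (hA i) (hA j)
      have h2 : gInner (oneBracket A A i j) (oneBracket A A i j)
          = gNorm (A i * A j - A j * A i) ^ 2 := by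
        rw [gNorm_sq _ (comm_skew _ _ (hA i) (hA j))]
        rfl
      rw [h2]
      have h3 : gNorm (A i * A j - A j * A i) ^ 2 ≤ (γ * gNorm (A i) * gNorm (A j)) ^ 2 := by
        apply sq_le_sq' _ h1
        have : 0 ≤ gNorm (A i * A j - A j * A i) := Real.sqrt_nonneg _
        nlinarith [mul_nonneg (mul_nonneg hγ (Real.sqrt_nonneg (gInner (A i) (A i))))
          (Real.sqrt_nonneg (gInner (A j) (A j)))]
      refine h3.trans_eq ?_
      have := gNorm_sq (A i) (hA i)
      have := gNorm_sq (A j) (hA j)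
      rw [mul_pow, mul_pow, gNorm_sq (A i) (hA i), gNorm_sq (A j) (hA j)]
  -- twoInner = (1/2) ∑∑ gInner per term
  have htwo : twoInner (oneBracket A A) (oneBracket A A)
      = (1/2) * ∑ i, ∑ j, gInner (oneBracket A A i j) (oneBracket A A i j) := by
    unfold twoInner gInner
    simp only [Finset.mul_sum]
    refine Finset.sum_congr rfl fun i _ => Finset.sum_congr rfl fun j _ => ?_
    ring
  -- sum of the bound
  have hsumbd : ∑ i, ∑ j, (if i = j then (0:ℝ) else γ ^ 2 * b i * b j)
      = γ ^ 2 * (S ^ 2 - ∑ i, b i ^ 2) := by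
    have : ∀ i : Fin n, ∑ j, (if i = j then (0:ℝ) else γ ^ 2 * b i * b j)
        = γ ^ 2 * b i * S - γ ^ 2 * b i ^ 2 := by
      intro i
      have h1 : ∑ j, (if i = j then (0:ℝ) else γ ^ 2 * b i * b j)
          = ∑ j, (γ ^ 2 * b i * b j - if i = j then γ ^ 2 * b i * b j else 0) := by
        refine Finset.sum_congr rfl fun j _ => ?_
        by_cases h : i = j <;> simp [h]
      rw [h1, Finset.sum_sub_distrib, Finset.sum_ite_eq, if_pos (Finset.mem_univ i),
        ← Finset.mul_sum, ← hSdef]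
      ring
    rw [Finset.sum_congr rfl fun i _ => this i, Finset.sum_sub_distrib, ← Finset.sum_mul]
    rw [← Finset.mul_sum, ← Finset.mul_sum, ← hSdef]
    ring
  -- Chebyshev
  have hcheb : S ^ 2 ≤ (n : ℝ) * ∑ i, b i ^ 2 := by
    have := sq_sum_le_card_mul_sum_sq (s := Finset.univ) (f := b)
    simpa [hSdef] using this
  -- total bound on twoInner
  have hT : twoInner (oneBracket A A) (oneBracket A A)
      ≤ γ ^ 2 * (((n : ℝ) - 1) / (2 * n)) * S ^ 2 := by
    rw [htwo]
    have hsum : ∑ i, ∑ j, gInner (oneBracket A A i j) (oneBracket A A i j)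
        ≤ γ ^ 2 * (S ^ 2 - ∑ i, b i ^ 2) := by
      rw [← hsumbd]
      exact Finset.sum_le_sum fun i _ => Finset.sum_le_sum fun j _ => hterm i j
    have h2 : γ ^ 2 * (S ^ 2 - ∑ i, b i ^ 2) ≤ γ ^ 2 * (S ^ 2 - S ^ 2 / n) := by
      apply mul_le_mul_of_nonneg_left _ (sq_nonneg γ)
      have : S ^ 2 / n ≤ ∑ i, b i ^ 2 := by
        rw [div_le_iff₀ hn0] at *
        nlinarith [hcheb]
      linarith
    have h3 : γ ^ 2 * (S ^ 2 - S ^ 2 / n) = 2 * (γ ^ 2 * (((n : ℝ) - 1) / (2 * n)) * S ^ 2) := by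
      field_simp
    linarith
  -- conclude
  have hRHS0 : 0 ≤ γ * Real.sqrt (((n : ℝ) - 1) / (2 * n)) * oneNorm A ^ 2 := by
    positivity
  unfold twoNorm
  rw [← Real.sqrt_sq hRHS0]
  apply Real.sqrt_le_sqrt
  calc twoInner (oneBracket A A) (oneBracket A A)
      ≤ γ ^ 2 * (((n : ℝ) - 1) / (2 * n)) * S ^ 2 := hT
    _ = (γ * Real.sqrt (((n : ℝ) - 1) / (2 * n)) * oneNorm A ^ 2) ^ 2 := by
        rw [honeSq, mul_pow, mul_pow, Real.sq_sqrt hc0]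
end

section
/- For every 𝔤-valued 1-form A, the bracket satisfies |[A,A]| ≤ √((n−1)/n)·|A|². -/
open Matrix Finset

namespace BSNAux

noncomputable def E {m : ℕ} (M : Matrix (Fin m) (Fin m) ℂ) : ℝ :=
  ∑ a, ∑ b, Complex.normSq (M a b)

lemma E_eq_trace {m : ℕ} (M : Matrix (Fin m) (Fin m) ℂ) :
    E M = (Matrix.trace (Mᴴ * M)).re := by
  unfold E
  rw [Matrix.trace]
  simp only [Matrix.diag, Matrix.mul_apply, Matrix.conjTranspose_apply]
  rw [Complex.re_sum]
  rw [Finset.sum_comm]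
  congr 1; ext a
  rw [Complex.re_sum]
  congr 1; ext b
  rw [mul_comm]
  rw [show star (M b a) = (starRingEnd ℂ) (M b a) from rfl, Complex.mul_conj]
  simp

lemma E_mul_left {m : ℕ} (U M : Matrix (Fin m) (Fin m) ℂ) (hU : Uᴴ * U = 1) :
    E (U * M) = E M := by
  rw [E_eq_trace, E_eq_trace]
  rw [Matrix.conjTranspose_mul]
  rw [show Mᴴ * Uᴴ * (U * M) = Mᴴ * (Uᴴ * U) * M by
    simp only [Matrix.mul_assoc]]
  rw [hU, Matrix.mul_one]

lemma E_mul_right {m : ℕ} (U M : Matrix (Fin m) (Fin m) ℂ) (hU : U * Uᴴ = 1) :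
    E (M * U) = E M := by
  rw [E_eq_trace, E_eq_trace]
  rw [Matrix.conjTranspose_mul]
  rw [show Uᴴ * Mᴴ * (M * U) = Uᴴ * (Mᴴ * M) * U by simp only [Matrix.mul_assoc]]
  rw [Matrix.trace_mul_cycle]
  rw [show U * Uᴴ * (Mᴴ * M) = (U * Uᴴ) * (Mᴴ * M) from rfl, hU, Matrix.one_mul]

set_option maxHeartbeats 2000000 in
theorem key {m : ℕ} (X Y : Matrix (Fin m) (Fin m) ℝ) (hX : Xᵀ = -X) (hY : Yᵀ = -Y) :
    (∑ a, ∑ b, ((X*Y - Y*X) a b)^2) ≤ (∑ a, ∑ b, (X a b)^2) * (∑ a, ∑ b, (Y a b)^2) := by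
  classical
  set φ : ℝ →+* ℂ := Complex.ofRealHom with hφ
  set X' : Matrix (Fin m) (Fin m) ℂ := X.map φ with hX'
  set Y' : Matrix (Fin m) (Fin m) ℂ := Y.map φ with hY'
  have hmapT : ∀ (M : Matrix (Fin m) (Fin m) ℝ), Mᵀ = -M → (M.map φ)ᵀ = -(M.map φ) := by
    intro M h
    ext a b
    have := congrFun (congrFun h a) b
    simp only [Matrix.transpose_apply, Matrix.neg_apply] at this ⊢
    simp [Matrix.map_apply, this]
  have hX'T : X'ᵀ = -X' := hmapT X hX
  have hY'T : Y'ᵀ = -Y' := hmapT Y hY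
  set H : Matrix (Fin m) (Fin m) ℂ := Complex.I • X' with hH
  have hHerm : H.IsHermitian := by
    unfold Matrix.IsHermitian
    rw [hH, Matrix.conjTranspose_smul]
    have : X'ᴴ = -X' := by
      ext a b
      have h2 : X b a = -(X a b) := by
        have := congrFun (congrFun hX a) b
        simpa [Matrix.transpose_apply, Matrix.neg_apply] using this
      simp [Matrix.conjTranspose_apply, hX', Matrix.map_apply, hφ, Complex.conj_ofReal, h2]
    rw [this]
    simp
  set lam := hHerm.eigenvalues with hlam
  set V : Matrix (Fin m) (Fin m) ℂ := ↑hHerm.eigenvectorUnitary with hV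
  have hU2 : V * Vᴴ = 1 := by
    rw [← Matrix.star_eq_conjTranspose]
    exact (Matrix.mem_unitaryGroup_iff).mp hHerm.eigenvectorUnitary.2
  have hU1 : Vᴴ * V = 1 := by
    rw [← Matrix.star_eq_conjTranspose]
    exact (Matrix.mem_unitaryGroup_iff').mp hHerm.eigenvectorUnitary.2
  have hspec : H = V * diagonal (fun c => (lam c : ℂ)) * Vᴴ := by
    have := hHerm.spectral_theorem
    rw [← Matrix.star_eq_conjTranspose]
    rw [Unitary.conjStarAlgAut_apply] at this
    exact this
  set d : Fin m → ℂ := fun c => -Complex.I * (lam c : ℂ) with hd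
  have hXd : X' = V * diagonal d * Vᴴ := by
    have h1 : X' = (-Complex.I) • H := by
      rw [hH, smul_smul]
      norm_num
    rw [h1, hspec, ← Matrix.smul_mul, ← Matrix.mul_smul]
    congr 2
    ext a b
    by_cases hab : a = b
    · subst hab; simp [Matrix.smul_apply, Matrix.diagonal_apply_eq, hd]
    · simp [Matrix.smul_apply, Matrix.diagonal_apply_ne _ hab]
  -- entrywise conjugate of V
  set Vc : Matrix (Fin m) (Fin m) ℂ := (Vᴴ)ᵀ with hVc
  have hc1 : Vc * Vᵀ = 1 := by
    have := congrArg Matrix.transpose hU2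
    rwa [Matrix.transpose_mul, Matrix.transpose_one] at this
  have hc2 : Vᵀ * Vc = 1 := by
    have := congrArg Matrix.transpose hU1
    rwa [Matrix.transpose_mul, Matrix.transpose_one] at this
  set Z : Matrix (Fin m) (Fin m) ℂ := Vᴴ * Y' * Vc with hZ
  have hZskew : Zᵀ = -Z := by
    rw [hZ, Matrix.transpose_mul, Matrix.transpose_mul, hVc, Matrix.transpose_transpose,
      hY'T]
    noncomm_ring
  have hXV : X' * V = V * diagonal d := by
    rw [hXd, Matrix.mul_assoc, Matrix.mul_assoc, hU1, Matrix.mul_one]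
  have hVcDVt : Vc * diagonal d * Vᵀ = -X' := by
    have h := congrArg Matrix.transpose hXd
    rw [Matrix.transpose_mul, Matrix.transpose_mul, Matrix.diagonal_transpose, hX'T,
      ← hVc] at h
    rw [h]
    noncomm_ring
  have hcomm : X' * Y' - Y' * X' = V * (diagonal d * Z + Z * diagonal d) * Vᵀ := by
    have e1 : V * (diagonal d * Z) * Vᵀ = X' * Y' := by
      calc V * (diagonal d * Z) * Vᵀ
          = (V * diagonal d * Vᴴ) * Y' * (Vc * Vᵀ) := by rw [hZ]; noncomm_ring
        _ = X' * Y' := by rw [← hXd, hc1, Matrix.mul_one]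
    have e2 : V * (Z * diagonal d) * Vᵀ = -(Y' * X') := by
      calc V * (Z * diagonal d) * Vᵀ
          = (V * Vᴴ) * Y' * (Vc * diagonal d * Vᵀ) := by rw [hZ]; noncomm_ring
        _ = Y' * -X' := by rw [hU2, Matrix.one_mul, hVcDVt]
        _ = -(Y' * X') := by noncomm_ring
    calc X' * Y' - Y' * X' = V * (diagonal d * Z) * Vᵀ + V * (Z * diagonal d) * Vᵀ := by
          rw [e1, e2]; noncomm_ring
      _ = V * (diagonal d * Z + Z * diagonal d) * Vᵀ := by noncomm_ring
  -- E computations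
  have hVtU : Vᵀ * (Vᵀ)ᴴ = 1 := by
    have : (Vᵀ)ᴴ = Vc := by
      rw [hVc]
      ext a b
      simp [Matrix.conjTranspose_apply, Matrix.transpose_apply]
    rw [this, hc2]
  have hVcU : Vc * (Vc)ᴴ = 1 := by
    have : (Vc)ᴴ = Vᵀ := by
      rw [hVc]
      ext a b
      simp [Matrix.conjTranspose_apply, Matrix.transpose_apply]
    rw [this, hc1]
  have hVHU : Vᴴ * (Vᴴ)ᴴ = 1 := by rw [Matrix.conjTranspose_conjTranspose, hU1]
  have hVHU' : (Vᴴ)ᴴ * Vᴴ = 1 := by rw [Matrix.conjTranspose_conjTranspose, hU2]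
  have eC : E (X' * Y' - Y' * X') = ∑ a, ∑ b, (lam a + lam b)^2 * Complex.normSq (Z a b) := by
    rw [hcomm, E_mul_right _ _ hVtU, E_mul_left _ _ hU1]
    unfold E
    congr 1; ext a; congr 1; ext b
    have hentry : (diagonal d * Z + Z * diagonal d) a b = (d a + d b) * Z a b := by
      simp only [Matrix.add_apply, Matrix.diagonal_mul, Matrix.mul_diagonal]
      ring
    rw [hentry, Complex.normSq_mul]
    congr 1
    have : d a + d b = -Complex.I * ((lam a : ℂ) + (lam b : ℂ)) := by rw [hd]; ring
    rw [this, Complex.normSq_mul]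
    have h1 : Complex.normSq (-Complex.I) = 1 := by simp
    have h2 : ((lam a : ℂ) + (lam b : ℂ)) = ((lam a + lam b : ℝ) : ℂ) := by push_cast; ring
    rw [h1, h2, Complex.normSq_ofReal]
    ring
  have eY : E Y' = E Z := by
    rw [hZ, E_mul_right _ _ hVcU, E_mul_left _ _ hVHU']
  have eX : E X' = ∑ c, (lam c)^2 := by
    rw [hXd, E_mul_right _ _ hVHU, E_mul_left _ _ hU1]
    unfold E
    have hrow : ∀ a : Fin m, (∑ b, Complex.normSq (diagonal d a b)) = (lam a)^2 := by
      intro a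
      rw [Finset.sum_eq_single a]
      · rw [Matrix.diagonal_apply_eq, hd]
        simp [Complex.normSq_mul, Complex.normSq_ofReal]
        ring
      · intro b _ hb
        rw [Matrix.diagonal_apply_ne' _ hb]
        simp
      · intro h; exact absurd (Finset.mem_univ a) h
    exact Finset.sum_congr rfl fun a _ => hrow a
  have hZdiag : ∀ a, Z a a = 0 := by
    intro a
    have := congrFun (congrFun hZskew a) a
    simp only [Matrix.transpose_apply, Matrix.neg_apply] at this
    linear_combination this / 2
  -- spectrum of X' is symmetric under negation
  have hsand : ∀ g : Fin m → ℂ, det (V * diagonal g * Vᴴ) = ∏ c, g c := by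
    intro g
    rw [Matrix.det_mul, Matrix.det_mul]
    have h1 : det Vᴴ * det V = 1 := by rw [← Matrix.det_mul, hU1, Matrix.det_one]
    calc det V * det (diagonal g) * det Vᴴ
        = det (diagonal g) * (det Vᴴ * det V) := by ring
      _ = det (diagonal g) := by rw [h1, mul_one]
      _ = ∏ c, g c := Matrix.det_diagonal
  have hVconst : ∀ z : ℂ, V * diagonal (fun _ : Fin m => z) * Vᴴ
      = diagonal (fun _ : Fin m => z) := by
    intro z
    rw [← Matrix.smul_one_eq_diagonal, Matrix.mul_smul, Matrix.mul_one,
      Matrix.smul_mul, hU2]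
  have hconj : ∀ x : ℝ, (∏ c, ((x:ℂ) - lam c)) = ∏ c, ((x:ℂ) + lam c) := by
    intro x
    have hd1 : det (diagonal (fun _ : Fin m => (x:ℂ)) - H) = ∏ c, ((x:ℂ) - lam c) := by
      conv_lhs => rw [hspec, ← hVconst (x:ℂ)]
      rw [show V * diagonal (fun _ : Fin m => (x:ℂ)) * Vᴴ - V * (diagonal fun c => ((lam c : ℝ) : ℂ)) * Vᴴ
          = V * (diagonal (fun _ : Fin m => (x:ℂ)) - diagonal (fun c => ((lam c : ℝ) : ℂ))) * Vᴴ by noncomm_ring]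
      rw [Matrix.diagonal_sub, hsand]
    have hd2 : det (diagonal (fun _ : Fin m => (x:ℂ)) + H) = ∏ c, ((x:ℂ) + lam c) := by
      conv_lhs => rw [hspec, ← hVconst (x:ℂ)]
      rw [show V * diagonal (fun _ : Fin m => (x:ℂ)) * Vᴴ + V * (diagonal fun c => ((lam c : ℝ) : ℂ)) * Vᴴ
          = V * (diagonal (fun _ : Fin m => (x:ℂ)) + diagonal (fun c => ((lam c : ℝ) : ℂ))) * Vᴴ by noncomm_ring]
      rw [Matrix.diagonal_add, hsand]
    have hmapc : (diagonal (fun _ : Fin m => (x:ℂ)) - H).map (starRingEnd ℂ)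
        = diagonal (fun _ : Fin m => (x:ℂ)) + H := by
      ext a b
      have hHab : H a b = Complex.I * ((X a b : ℝ) : ℂ) := by
        rw [hH]
        simp [Matrix.smul_apply, smul_eq_mul, hX', Matrix.map_apply, hφ]
      by_cases hab : a = b
      · subst hab
        simp only [Matrix.map_apply, Matrix.sub_apply, Matrix.add_apply,
          Matrix.diagonal_apply_eq, hHab, _root_.map_sub, _root_.map_mul, map_zero,
          Complex.conj_I, Complex.conj_ofReal]
        ring
      · simp only [Matrix.map_apply, Matrix.sub_apply, Matrix.add_apply,
          Matrix.diagonal_apply_ne _ hab, hHab, _root_.map_sub, _root_.map_mul, map_zero,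
          Complex.conj_I, Complex.conj_ofReal]
        ring
    have hstar : (starRingEnd ℂ) (det (diagonal (fun _ : Fin m => (x:ℂ)) - H))
        = det (diagonal (fun _ : Fin m => (x:ℂ)) + H) := by
      rw [RingHom.map_det, RingHom.mapMatrix_apply, hmapc]
    rw [hd1, hd2] at hstar
    rw [← hstar, map_prod]
    exact Finset.prod_congr rfl fun c _ => by
      rw [_root_.map_sub, Complex.conj_ofReal, Complex.conj_ofReal]
  have hprodR : ∀ x : ℝ, (∏ c, (x - lam c)) = ∏ c, (x + lam c) := by
    intro x
    have h := hconj x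
    have h1 : (((∏ c, (x - lam c)) : ℝ) : ℂ) = ∏ c, ((x:ℂ) - lam c) := by push_cast; rfl
    have h2 : (((∏ c, (x + lam c)) : ℝ) : ℂ) = ∏ c, ((x:ℂ) + lam c) := by push_cast; rfl
    exact_mod_cast h1 ▸ h2 ▸ (h1.trans (h.trans h2.symm))
  -- multiset of eigenvalues is symmetric under negation
  set M0 : Multiset ℝ := Multiset.map lam Finset.univ.val with hM0
  have hroots : M0.map (fun t => -t) = M0 := by
    have hp : ((M0.map (fun t => -t)).map (fun r => Polynomial.X - Polynomial.C r)).prod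
        = (M0.map (fun r => Polynomial.X - Polynomial.C r)).prod := by
      apply Polynomial.funext
      intro x
      rw [Polynomial.eval_multiset_prod, Polynomial.eval_multiset_prod]
      rw [Multiset.map_map, Multiset.map_map, Multiset.map_map, Multiset.map_map,
        Multiset.map_map]
      rw [← Finset.prod_eq_multiset_prod, ← Finset.prod_eq_multiset_prod]
      simp only [Function.comp_apply, Polynomial.eval_sub, Polynomial.eval_X,
        Polynomial.eval_C, sub_neg_eq_add]
      exact (hprodR x).symm
    calc M0.map (fun t => -t)
        = ((M0.map (fun t => -t)).map (fun r => Polynomial.X - Polynomial.C r)).prod.roots :=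
          (Polynomial.roots_multiset_prod_X_sub_C _).symm
      _ = ((M0.map (fun r => Polynomial.X - Polynomial.C r)).prod).roots := by rw [hp]
      _ = M0 := Polynomial.roots_multiset_prod_X_sub_C _
  have hfsum : ∀ f : ℝ → ℝ, (∑ c, f (-(lam c))) = ∑ c, f (lam c) := by
    intro f
    have h1 : (∑ c, f (-(lam c))) = ((M0.map (fun t => -t)).map f).sum := by
      rw [Multiset.map_map, Multiset.map_map, Finset.sum_eq_multiset_sum]
      rfl
    have h2 : (∑ c, f (lam c)) = (M0.map f).sum := by
      rw [Multiset.map_map, Finset.sum_eq_multiset_sum]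
      rfl
    rw [h1, h2, hroots]
  -- pairing inequality
  have hpairsum : ∀ a b : Fin m, a ≠ b → (lam a)^2 + (lam b)^2 ≤ ∑ c, (lam c)^2 := by
    intro a b hab
    have h1 : ∑ c ∈ ({a, b} : Finset (Fin m)), (lam c)^2 ≤ ∑ c, (lam c)^2 :=
      Finset.sum_le_sum_of_subset_of_nonneg (Finset.subset_univ _) fun c _ _ => sq_nonneg _
    rwa [Finset.sum_pair hab] at h1
  have hpair : ∀ a b : Fin m, a ≠ b → (lam a + lam b)^2 ≤ ∑ c, (lam c)^2 := by
    intro a b hab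
    rcases le_or_gt (lam a * lam b) 0 with hle | hgt
    · nlinarith [hpairsum a b hab]
    · have key2 : ∀ g : ℝ → ℝ, (∀ t, 0 ≤ g t) → (∀ t, t^2 = g t + g (-t)) →
          g (lam a) = (lam a)^2 → g (lam b) = (lam b)^2 →
          (lam a + lam b)^2 ≤ ∑ c, (lam c)^2 := by
        intro g hg0 hgsq hga hgb
        have h1 : (∑ c, (lam c)^2) = (∑ c, g (lam c)) + (∑ c, g (lam c)) := by
          calc (∑ c, (lam c)^2) = ∑ c, (g (lam c) + g (-(lam c))) :=
                Finset.sum_congr rfl fun c _ => hgsq (lam c)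
            _ = (∑ c, g (lam c)) + (∑ c, g (-(lam c))) := Finset.sum_add_distrib
            _ = (∑ c, g (lam c)) + (∑ c, g (lam c)) := by rw [hfsum g]
        have h2 : g (lam a) + g (lam b) ≤ ∑ c, g (lam c) := by
          have h3 : ∑ c ∈ ({a, b} : Finset (Fin m)), g (lam c) ≤ ∑ c, g (lam c) :=
            Finset.sum_le_sum_of_subset_of_nonneg (Finset.subset_univ _) fun c _ _ => hg0 _
          rwa [Finset.sum_pair hab] at h3
        nlinarith [sq_nonneg (lam a - lam b)]
      rcases lt_or_ge (lam a) 0 with hneg | hpos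
      · have hbneg : lam b < 0 := by
          rcases mul_pos_iff.mp hgt with ⟨h1, _⟩ | ⟨_, h2⟩
          · linarith
          · exact h2
        exact key2 (fun t => if t < 0 then t^2 else 0)
          (fun t => by split <;> positivity)
          (fun t => by
            rcases lt_trichotomy t 0 with h | h | h
            · simp [h, not_lt.mpr (neg_pos.mpr h).le]
            · simp [h]
            · simp [not_lt.mpr h.le, neg_lt_zero.mpr h])
          (by simp [hneg]) (by simp [hbneg])
      · have hapos : 0 < lam a := by
          rcases eq_or_lt_of_le hpos with h | h
          · exfalso; rw [← h] at hgt; simp at hgt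
          · exact h
        have hbpos : 0 < lam b := by
          rcases mul_pos_iff.mp hgt with ⟨_, h1⟩ | ⟨h2, _⟩
          · exact h1
          · linarith
        exact key2 (fun t => if 0 < t then t^2 else 0)
          (fun t => by split <;> positivity)
          (fun t => by
            rcases lt_trichotomy t 0 with h | h | h
            · simp [not_lt.mpr h.le, neg_pos.mpr h]
            · simp [h]
            · simp [h, not_lt.mpr (neg_nonpos_of_nonneg h.le)])
          (by simp [hapos]) (by simp [hbpos])
  -- main complex estimate
  have emain : E (X' * Y' - Y' * X') ≤ E X' * E Y' := by
    rw [eC, eX, eY]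
    unfold E
    calc ∑ a, ∑ b, (lam a + lam b)^2 * Complex.normSq (Z a b)
        ≤ ∑ a, ∑ b, (∑ c, (lam c)^2) * Complex.normSq (Z a b) := by
          apply Finset.sum_le_sum; intro a _
          apply Finset.sum_le_sum; intro b _
          by_cases hab : a = b
          · subst hab; rw [hZdiag a]; simp
          · exact mul_le_mul_of_nonneg_right (hpair a b hab) (Complex.normSq_nonneg _)
      _ = (∑ c, (lam c)^2) * ∑ a, ∑ b, Complex.normSq (Z a b) := by
          rw [Finset.mul_sum]
          exact Finset.sum_congr rfl fun a _ => (Finset.mul_sum _ _ _).symm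
  -- bridge to ℝ
  have hbridge : ∀ M : Matrix (Fin m) (Fin m) ℝ, (∑ a, ∑ b, (M a b)^2) = E (M.map φ) := by
    intro M
    unfold E
    apply Finset.sum_congr rfl fun a _ => Finset.sum_congr rfl fun b _ => ?_
    rw [Matrix.map_apply]
    simp only [hφ, Complex.ofRealHom_eq_coe]
    rw [Complex.normSq_ofReal, sq]
  have hmapC : (X * Y - Y * X).map ⇑φ = X' * Y' - Y' * X' := by
    have h1 : (X * Y).map ⇑φ = X' * Y' := Matrix.map_mul
    have h2 : (Y * X).map ⇑φ = Y' * X' := Matrix.map_mul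
    ext a b
    have e1 := congrFun (congrFun h1 a) b
    have e2 := congrFun (congrFun h2 a) b
    simp only [Matrix.map_apply, Matrix.sub_apply, _root_.map_sub]
    rw [← e1, ← e2]
    simp only [Matrix.map_apply]
  calc (∑ a, ∑ b, ((X*Y - Y*X) a b)^2) = E ((X * Y - Y * X).map ⇑φ) := hbridge _
    _ = E (X' * Y' - Y' * X') := by rw [hmapC]
    _ ≤ E X' * E Y' := emain
    _ = (∑ a, ∑ b, (X a b)^2) * (∑ a, ∑ b, (Y a b)^2) := by
        rw [← hbridge X, ← hbridge Y]

lemma trace_sq_of_skew {m : ℕ} (M : Matrix (Fin m) (Fin m) ℝ) (h : Mᵀ = -M) :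
    (M * M).trace = -∑ a, ∑ b, (M a b)^2 := by
  have hM : ∀ a b, M b a = -(M a b) := by
    intro a b
    have := congrFun (congrFun h a) b
    simpa using this
  rw [Matrix.trace]
  simp only [Matrix.diag, Matrix.mul_apply]
  calc ∑ a, ∑ b, M a b * M b a = ∑ a, ∑ b, -((M a b)^2) := by
        apply Finset.sum_congr rfl; intro a _
        apply Finset.sum_congr rfl; intro b _
        rw [hM a b]; ring
    _ = -∑ a, ∑ b, (M a b)^2 := by
        simp [Finset.sum_neg_distrib]

end BSNAux

set_option maxHeartbeats 1000000 in
/-- For every `𝔤`-valued 1-form `A`, `|[A,A]| ≤ √((n−1)/n)·|A|²`. -/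
theorem bracket_self_norm_le' (m n : ℕ) (hm : 1 ≤ m) (hn : 1 ≤ n)
    (A : Fin n → Matrix (Fin m) (Fin m) ℝ) (hA : ∀ i, (A i)ᵀ = -(A i)) :
    twoNorm (oneBracket A A) ≤ Real.sqrt (((n : ℝ) - 1) / n) * oneNorm A ^ 2 := by
  classical
  set t : Fin n → ℝ := fun i => ∑ a, ∑ b, (A i a b)^2 with ht
  have htnn : ∀ i, 0 ≤ t i :=
    fun i => Finset.sum_nonneg fun a _ => Finset.sum_nonneg fun b _ => sq_nonneg _
  set T : ℝ := ∑ i, t i with hT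
  have hTnn : 0 ≤ T := Finset.sum_nonneg fun i _ => htnn i
  have hone : oneInner A A = T / 2 := by
    unfold oneInner
    rw [Finset.sum_congr rfl fun i (_ : i ∈ Finset.univ) => BSNAux.trace_sq_of_skew (A i) (hA i)]
    rw [Finset.sum_neg_distrib]
    rw [hT]
    ring
  have hskewB : ∀ i j, (oneBracket A A i j)ᵀ = -(oneBracket A A i j) := by
    intro i j
    show (A i * A j - A j * A i)ᵀ = -(A i * A j - A j * A i)
    rw [Matrix.transpose_sub, Matrix.transpose_mul, Matrix.transpose_mul, hA i, hA j]
    noncomm_ring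
  set s : Fin n → Fin n → ℝ := fun i j => ∑ a, ∑ b, ((oneBracket A A i j) a b)^2 with hs
  have htwo : twoInner (oneBracket A A) (oneBracket A A) = (∑ i, ∑ j, s i j)/4 := by
    unfold twoInner
    rw [Finset.sum_congr rfl fun i (_ : i ∈ Finset.univ) =>
      Finset.sum_congr rfl fun j (_ : j ∈ Finset.univ) =>
        BSNAux.trace_sq_of_skew (oneBracket A A i j) (hskewB i j)]
    simp only [Finset.sum_neg_distrib]
    rw [hs]
    ring
  have hKij : ∀ i j, s i j ≤ (if i = j then 0 else t i * t j) := by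
    intro i j
    by_cases hij : i = j
    · subst hij
      simp only [if_pos rfl, hs]
      have hz : oneBracket A A i i = 0 := sub_self _
      apply le_of_eq
      rw [hz]
      simp
    · simp only [if_neg hij, hs, ht]
      exact BSNAux.key (A i) (A j) (hA i) (hA j)
  have hsum1 : (∑ i, ∑ j, s i j) ≤ T*T - ∑ i, (t i)^2 := by
    calc ∑ i, ∑ j, s i j ≤ ∑ i, ∑ j, (if i = j then 0 else t i * t j) :=
          Finset.sum_le_sum fun i _ => Finset.sum_le_sum fun j _ => hKij i j
      _ = T*T - ∑ i, (t i)^2 := by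
          have hrow : ∀ i : Fin n, (∑ j, (if i = j then 0 else t i * t j))
              = (∑ j, t i * t j) - (t i)^2 := by
            intro i
            have h0 : ∀ j, (if i = j then 0 else t i * t j)
                = t i * t j - (if i = j then t i * t j else 0) := by
              intro j; split <;> ring
            rw [Finset.sum_congr rfl fun j _ => h0 j, Finset.sum_sub_distrib,
              Finset.sum_ite_eq]
            simp [sq]
          rw [Finset.sum_congr rfl fun i (_ : i ∈ Finset.univ) => hrow i,
            Finset.sum_sub_distrib, hT, Finset.sum_mul_sum]
  have hn' : (1:ℝ) ≤ (n:ℝ) := by exact_mod_cast hn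
  have hnpos : (0:ℝ) < (n:ℝ) := by linarith
  have hcs : T^2 ≤ (n:ℝ) * ∑ i, (t i)^2 := by
    have := sq_sum_le_card_mul_sum_sq (s := (Finset.univ : Finset (Fin n))) (f := t)
    simpa [hT] using this
  have hineq : twoInner (oneBracket A A) (oneBracket A A)
      ≤ (((n:ℝ)-1)/n) * (oneInner A A)^2 := by
    rw [htwo, hone]
    have h1 : T^2/(n:ℝ) ≤ ∑ i, (t i)^2 := by
      rw [div_le_iff₀ hnpos]
      linarith [hcs]
    have h2 : (∑ i, ∑ j, s i j) ≤ T*T - T^2/(n:ℝ) := by linarith [hsum1]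
    calc (∑ i, ∑ j, s i j)/4 ≤ (T*T - T^2/(n:ℝ))/4 := by linarith
      _ = (((n:ℝ)-1)/n) * (T/2)^2 := by field_simp; ring
  unfold twoNorm oneNorm
  have hq : 0 ≤ oneInner A A := by rw [hone]; linarith
  have hc : 0 ≤ ((n:ℝ)-1)/(n:ℝ) := by apply div_nonneg <;> linarith
  calc Real.sqrt (twoInner (oneBracket A A) (oneBracket A A))
      ≤ Real.sqrt ((((n:ℝ)-1)/n) * (oneInner A A)^2) := Real.sqrt_le_sqrt hineq
    _ = Real.sqrt (((n:ℝ)-1)/n) * Real.sqrt ((oneInner A A)^2) := Real.sqrt_mul hc _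
    _ = Real.sqrt (((n:ℝ)-1)/n) * (oneInner A A) := by rw [Real.sqrt_sq hq]
    _ = Real.sqrt (((n:ℝ)-1)/n) * (Real.sqrt (oneInner A A))^2 := by rw [Real.sq_sqrt hq]
end

section
/- For all real skew-symmetric m×m matrices X and Y, the commutator satisfies |XY − YX| ≤ √2·|X|·|Y|. -/
open Matrix

namespace SkewCommAux

open Matrix Complex Finset Polynomial


variable {m : ℕ}

def cmap (X : Matrix (Fin m) (Fin m) ℝ) : Matrix (Fin m) (Fin m) ℂ :=
  X.map (Complex.ofRealHom : ℝ →+* ℂ)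

noncomputable def frobC (M : Matrix (Fin m) (Fin m) ℂ) : ℝ :=
  ∑ i, ∑ j, Complex.normSq (M i j)

lemma frobC_nonneg (M : Matrix (Fin m) (Fin m) ℂ) : 0 ≤ frobC M := by
  apply Finset.sum_nonneg; intro i _; apply Finset.sum_nonneg; intro j _
  exact Complex.normSq_nonneg _

lemma trace_conjTranspose_mul (M : Matrix (Fin m) (Fin m) ℂ) :
    (Mᴴ * M).trace = (frobC M : ℂ) := by
  simp only [Matrix.trace, Matrix.diag, Matrix.mul_apply, Matrix.conjTranspose_apply, frobC]
  push_cast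
  rw [Finset.sum_comm]
  congr 1; ext i; congr 1; ext j
  rw [Complex.normSq_eq_conj_mul_self]; rfl

lemma frobC_unitary_conj (V : Matrix (Fin m) (Fin m) ℂ) (hV : V ∈ Matrix.unitaryGroup (Fin m) ℂ)
    (M : Matrix (Fin m) (Fin m) ℂ) : frobC (star V * M * V) = frobC M := by
  have h1 : star V * V = 1 := (Matrix.mem_unitaryGroup_iff').mp hV
  have h2 : V * star V = 1 := (Matrix.mem_unitaryGroup_iff).mp hV
  have := trace_conjTranspose_mul (star V * M * V)
  have h3 : (star V * M * V)ᴴ * (star V * M * V) = star V * (Mᴴ * M) * V := by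
    simp only [Matrix.conjTranspose_mul, Matrix.conjTranspose_conjTranspose]
    have h5 : (star V)ᴴ * star V = 1 := by
      simpa [Matrix.star_eq_conjTranspose] using h2
    calc Vᴴ * (Mᴴ * (star V)ᴴ) * (star V * M * V)
        = Vᴴ * Mᴴ * ((star V)ᴴ * star V) * (M * V) := by
          simp only [Matrix.mul_assoc]
      _ = star V * (Mᴴ * M) * V := by
          rw [h5]
          simp only [Matrix.mul_one, Matrix.star_eq_conjTranspose, Matrix.mul_assoc]
  have h4 : ((star V * M * V)ᴴ * (star V * M * V)).trace = (Mᴴ * M).trace := by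
    rw [h3, Matrix.trace_mul_cycle, ← Matrix.mul_assoc, h2, Matrix.one_mul]
  rw [trace_conjTranspose_mul, trace_conjTranspose_mul] at h4
  exact_mod_cast h4


lemma antisym_quad_zero (M : Matrix (Fin m) (Fin m) ℂ) (hM : ∀ p q, M q p = -M p q)
    (v : Fin m → ℂ) : ∑ p, ∑ q, M p q * (v p * v q) = 0 := by
  have h1 : (∑ p, ∑ q, M p q * (v p * v q)) = ∑ p, ∑ q, M q p * (v q * v p) :=
    Finset.sum_comm (s := univ) (t := univ) (f := fun q p => M q p * (v q * v p))
  have h2 : (∑ p, ∑ q, M q p * (v q * v p)) = -∑ p, ∑ q, M p q * (v p * v q) := by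
    rw [← Finset.sum_neg_distrib]
    apply Finset.sum_congr rfl; intro p _
    rw [← Finset.sum_neg_distrib]
    apply Finset.sum_congr rfl; intro q _
    rw [hM p q]; ring
  linear_combination (h1.trans h2) / 2

lemma sum_sq_two (lam : Fin m → ℝ) {j k : Fin m} (hjk : j ≠ k) :
    lam j ^ 2 + lam k ^ 2 ≤ ∑ i, lam i ^ 2 := by
  classical
  have hsub : ({j, k} : Finset (Fin m)) ⊆ univ := subset_univ _
  have h := Finset.sum_le_sum_of_subset_of_nonneg hsub
    (fun i _ _ => sq_nonneg (lam i))
  rwa [Finset.sum_pair hjk] at h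

lemma sum_sq_four (lam : Fin m → ℝ) {j k j' k' : Fin m} (h12 : j ≠ k)
    (h31 : j' ≠ j) (h32 : j' ≠ k) (h41 : k' ≠ j) (h42 : k' ≠ k) (h43 : k' ≠ j') :
    lam j ^ 2 + lam k ^ 2 + lam j' ^ 2 + lam k' ^ 2 ≤ ∑ i, lam i ^ 2 := by
  classical
  have hsub : ({j, k, j', k'} : Finset (Fin m)) ⊆ univ := subset_univ _
  have h := Finset.sum_le_sum_of_subset_of_nonneg hsub
    (fun i _ _ => sq_nonneg (lam i))
  rw [Finset.sum_insert (by simp [h12, h31.symm, h41.symm]),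
    Finset.sum_insert (by simp [h32.symm, h42.symm]),
    Finset.sum_pair h43.symm] at h
  linarith


lemma det_smul_one_sub_diag (t : ℂ) (lam : Fin m → ℝ) :
    (t • (1 : Matrix (Fin m) (Fin m) ℂ) - Matrix.diagonal (fun j => (lam j : ℂ))).det
      = ∏ j, (t - (lam j : ℂ)) := by
  rw [Matrix.smul_one_eq_diagonal, Matrix.diagonal_sub, Matrix.det_diagonal]

lemma det_conj_unitary (V : Matrix (Fin m) (Fin m) ℂ) (hV : V ∈ Matrix.unitaryGroup (Fin m) ℂ)
    (A : Matrix (Fin m) (Fin m) ℂ) : (V * A * star V).det = A.det := by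
  have h2 : V * star V = 1 := (Matrix.mem_unitaryGroup_iff).mp hV
  rw [Matrix.det_mul, Matrix.det_mul]
  have : V.det * (star V).det = 1 := by
    rw [← Matrix.det_mul, h2, Matrix.det_one]
  calc V.det * A.det * (star V).det = A.det * (V.det * (star V).det) := by ring
    _ = A.det := by rw [this, mul_one]

lemma eigen_pairing (X : Matrix (Fin m) (Fin m) ℝ) (hX : Xᵀ = -X)
    (hH : (Complex.I • cmap X).IsHermitian) (c : ℝ) :
    (univ.filter (fun j => hH.eigenvalues j = c)).card
      = (univ.filter (fun j => hH.eigenvalues j = -c)).card := by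
  set H := Complex.I • cmap X with hHdef
  set lam := hH.eigenvalues with hlam
  set V := (hH.eigenvectorUnitary : Matrix (Fin m) (Fin m) ℂ) with hVdef
  have hV : V ∈ Matrix.unitaryGroup (Fin m) ℂ := hH.eigenvectorUnitary.2
  have h1 : star V * V = 1 := (Matrix.mem_unitaryGroup_iff').mp hV
  have h2 : V * star V = 1 := (Matrix.mem_unitaryGroup_iff).mp hV
  have hspec : H = V * Matrix.diagonal (fun j => (lam j : ℂ)) * star V := by
    have := hH.spectral_theorem
    exact this
  have hHT : Hᵀ = -H := by
    ext i j
    simp [hHdef, cmap, Matrix.transpose_apply]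
    have : X j i = -X i j := by
      have := congrFun (congrFun hX i) j
      simpa [Matrix.transpose_apply] using this
    rw [this]; push_cast; ring
  -- determinant identity
  have hdet : ∀ t : ℂ, ∏ j, (t - (lam j : ℂ)) = ∏ j, (t + (lam j : ℂ)) := by
    intro t
    have e1 : t • (1 : Matrix (Fin m) (Fin m) ℂ) - H
        = V * (t • 1 - Matrix.diagonal (fun j => (lam j : ℂ))) * star V := by
      rw [Matrix.mul_sub, Matrix.sub_mul, ← hspec]
      congr 1
      rw [Matrix.mul_smul, Matrix.mul_one, Matrix.smul_mul, h2]
    have e2 : t • (1 : Matrix (Fin m) (Fin m) ℂ) + H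
        = V * (t • 1 + Matrix.diagonal (fun j => (lam j : ℂ))) * star V := by
      rw [Matrix.mul_add, Matrix.add_mul, ← hspec]
      congr 1
      rw [Matrix.mul_smul, Matrix.mul_one, Matrix.smul_mul, h2]
    have d1 : (t • (1 : Matrix (Fin m) (Fin m) ℂ) - H).det = ∏ j, (t - (lam j : ℂ)) := by
      rw [e1, det_conj_unitary V hV, det_smul_one_sub_diag]
    have d2 : (t • (1 : Matrix (Fin m) (Fin m) ℂ) + H).det = ∏ j, (t + (lam j : ℂ)) := by
      rw [e2, det_conj_unitary V hV]
      rw [Matrix.smul_one_eq_diagonal, Matrix.diagonal_add, Matrix.det_diagonal]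
    have d3 : (t • (1 : Matrix (Fin m) (Fin m) ℂ) - H).det
        = (t • (1 : Matrix (Fin m) (Fin m) ℂ) + H).det := by
      rw [← Matrix.det_transpose (t • (1 : Matrix (Fin m) (Fin m) ℂ) - H)]
      congr 1
      rw [Matrix.transpose_sub, Matrix.transpose_smul, Matrix.transpose_one, hHT,
        sub_neg_eq_add]
    rw [← d1, d3, d2]
  -- polynomial identity
  have hpoly : ∏ j, (Polynomial.X - Polynomial.C ((lam j : ℂ)))
      = ∏ j, (Polynomial.X - Polynomial.C ((-lam j : ℝ) : ℂ)) := by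
    apply Polynomial.funext
    intro t
    simp only [Polynomial.eval_prod, Polynomial.eval_sub, Polynomial.eval_X, Polynomial.eval_C]
    push_cast
    simpa [sub_neg_eq_add] using hdet t
  -- multiset equality
  have hms : (univ.val.map fun j => ((lam j : ℝ) : ℂ))
      = (univ.val.map fun j => ((-lam j : ℝ) : ℂ)) := by
    have r1 := Polynomial.roots_multiset_prod_X_sub_C (univ.val.map fun j => ((lam j : ℝ) : ℂ))
    have r2 := Polynomial.roots_multiset_prod_X_sub_C (univ.val.map fun j => ((-lam j : ℝ) : ℂ))
    rw [Multiset.map_map] at r1 r2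
    have e1 : ((univ.val.map fun j => Polynomial.X - Polynomial.C ((lam j : ℝ) : ℂ))).prod
        = ∏ j, (Polynomial.X - Polynomial.C ((lam j : ℂ))) := by
      rw [Finset.prod_eq_multiset_prod]
    have e2 : ((univ.val.map fun j => Polynomial.X - Polynomial.C ((-lam j : ℝ) : ℂ))).prod
        = ∏ j, (Polynomial.X - Polynomial.C ((-lam j : ℝ) : ℂ)) := by
      rw [Finset.prod_eq_multiset_prod]
    rw [← r1, ← r2]
    simp only [Function.comp] at *
    rw [e1, e2, hpoly]
  -- counting
  have hcount := congrArg (Multiset.count ((c : ℝ) : ℂ)) hms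
  rw [Multiset.count_map, Multiset.count_map] at hcount
  have l1 : (univ.filter (fun j => lam j = c)).card
      = Multiset.card (Multiset.filter (fun a => ((c:ℝ):ℂ) = ((lam a : ℝ):ℂ)) univ.val) := by
    rw [show (Multiset.filter (fun a => ((c:ℝ):ℂ) = ((lam a : ℝ):ℂ)) univ.val)
        = Multiset.filter (fun j => lam j = c) univ.val from
      Multiset.filter_congr (fun a _ => by simp [eq_comm])]
    rw [← Finset.filter_val]
    rfl
  have l2 : (univ.filter (fun j => lam j = -c)).card
      = Multiset.card (Multiset.filter (fun a => ((c:ℝ):ℂ) = ((-lam a : ℝ):ℂ)) univ.val) := by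
    rw [show (Multiset.filter (fun a => ((c:ℝ):ℂ) = ((-lam a : ℝ):ℂ)) univ.val)
        = Multiset.filter (fun j => lam j = -c) univ.val from
      Multiset.filter_congr (fun a _ => by
        simp only [Complex.ofReal_inj]
        constructor <;> intro h <;> linarith)]
    rw [← Finset.filter_val]
    rfl
  rw [l1, l2, hcount]


theorem key (X Y : Matrix (Fin m) (Fin m) ℝ) (hX : Xᵀ = -X) (hY : Yᵀ = -Y) :
    frobC (cmap (X * Y - Y * X)) ≤ frobC (cmap X) * frobC (cmap Y) := by
  classical
  have hXskew : ∀ p q, X q p = -X p q := fun p q => by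
    have := congrFun (congrFun hX p) q
    simpa [Matrix.transpose_apply] using this
  have hYskew : ∀ p q, Y q p = -Y p q := fun p q => by
    have := congrFun (congrFun hY p) q
    simpa [Matrix.transpose_apply] using this
  have hH : (Complex.I • cmap X).IsHermitian := by
    have hmapT : (cmap X)ᴴ = cmap Xᵀ := by
      ext i j; simp [cmap, Matrix.conjTranspose_apply]
    unfold Matrix.IsHermitian
    rw [Matrix.conjTranspose_smul, hmapT, hX]
    ext i j
    simp [cmap]
  set H : Matrix (Fin m) (Fin m) ℂ := Complex.I • cmap X with hHdef
  set lam : Fin m → ℝ := hH.eigenvalues with hlamdef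
  set V : Matrix (Fin m) (Fin m) ℂ := (hH.eigenvectorUnitary : Matrix (Fin m) (Fin m) ℂ)
    with hVdef
  have hV : V ∈ Matrix.unitaryGroup (Fin m) ℂ := hH.eigenvectorUnitary.2
  have h1 : star V * V = 1 := (Matrix.mem_unitaryGroup_iff').mp hV
  have h2 : V * star V = 1 := (Matrix.mem_unitaryGroup_iff).mp hV
  have hdiag : star V * H * V = Matrix.diagonal (fun j => (lam j : ℂ)) := by
    have := hH.conjStarAlgAut_star_eigenvectorUnitary
    rw [Unitary.conjStarAlgAut_star_apply] at this; exact this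
  -- eigenvalue pairing
  have hpair : ∀ c : ℝ, (univ.filter (fun j => lam j = c)).card
      = (univ.filter (fun j => lam j = -c)).card := by
    intro c
    exact eigen_pairing X hX hH c
  -- conjugated matrices
  set X' : Matrix (Fin m) (Fin m) ℂ := star V * cmap X * V with hX'def
  set Y' : Matrix (Fin m) (Fin m) ℂ := star V * cmap Y * V with hY'def
  have hX'diag : X' = Matrix.diagonal (fun j => -Complex.I * (lam j : ℂ)) := by
    have hcx : cmap X = (-Complex.I) • H := by
      rw [hHdef, smul_smul]
      norm_num [Complex.I_mul_I]
    rw [hX'def, hcx, Matrix.mul_smul, Matrix.smul_mul, hdiag]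
    ext i j
    by_cases hij : i = j <;>
      simp [Matrix.diagonal_apply, hij, Matrix.smul_apply]
  -- the conjugated commutator
  have hcomm : star V * cmap (X * Y - Y * X) * V = X' * Y' - Y' * X' := by
    have hmul : ∀ A B : Matrix (Fin m) (Fin m) ℂ,
        star V * (A * B) * V = (star V * A * V) * (star V * B * V) := by
      intro A B
      calc star V * (A * B) * V = star V * A * (V * star V) * B * V := by
            rw [h2]; simp only [Matrix.mul_one, Matrix.mul_assoc]
        _ = (star V * A * V) * (star V * B * V) := by simp only [Matrix.mul_assoc]
    have hsub : cmap (X * Y - Y * X) = cmap X * cmap Y - cmap Y * cmap X := by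
      ext i j
      simp [cmap, Matrix.sub_apply, Matrix.mul_apply]
    rw [hsub, Matrix.mul_sub, Matrix.sub_mul, hmul, hmul]
  -- entries of the commutator
  have hZent : ∀ j k, (X' * Y' - Y' * X') j k
      = (-Complex.I * ((lam j : ℂ) - (lam k : ℂ))) * Y' j k := by
    intro j k
    rw [Matrix.sub_apply, hX'diag, Matrix.diagonal_mul, Matrix.mul_diagonal]
    ring
  -- frobenius computations
  have hfrobZ : frobC (X' * Y' - Y' * X')
      = ∑ j, ∑ k, (lam j - lam k)^2 * Complex.normSq (Y' j k) := by
    unfold frobC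
    apply Finset.sum_congr rfl; intro j _
    apply Finset.sum_congr rfl; intro k _
    rw [hZent j k]
    have e : -Complex.I * ((lam j : ℂ) - (lam k : ℂ)) * Y' j k
        = -Complex.I * ((lam j - lam k : ℝ) : ℂ) * Y' j k := by push_cast; ring
    rw [e, Complex.normSq_mul, Complex.normSq_mul, Complex.normSq_neg, Complex.normSq_I,
      Complex.normSq_ofReal]
    ring
  have hfrobX' : frobC X' = ∑ j, lam j ^ 2 := by
    rw [hX'diag]
    unfold frobC
    have : ∀ i j : Fin m, Complex.normSq (Matrix.diagonal
        (fun j => -Complex.I * (lam j : ℂ)) i j) = if j = i then lam i ^2 else 0 := by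
      intro i j
      by_cases hij : i = j
      · subst hij
        simp [Matrix.diagonal_apply_eq, Complex.normSq_mul, Complex.normSq_ofReal, sq]
      · simp [Matrix.diagonal_apply_ne _ hij, Ne.symm hij]
    simp only [this]
    simp
  -- eigenvectors
  set u : Fin m → (Fin m → ℂ) := fun j => ⇑(hH.eigenvectorBasis j) with hudef
  have hVu : ∀ i j, V i j = u j i := fun i j => hH.eigenvectorUnitary_apply i j
  have hHu : ∀ j, H *ᵥ u j = (lam j : ℂ) • u j := by
    intro j
    have h := hH.mulVec_eigenvectorBasis j
    funext i
    have := congrFun h i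
    simpa [Complex.real_smul] using this
  have eig_unique : ∀ (j : Fin m) (v : Fin m → ℂ), (∀ i, lam i = lam j → i = j) →
      H *ᵥ v = (lam j : ℂ) • v → ∃ cc : ℂ, v = cc • u j := by
    intro j v huniq hv
    set w : Fin m → ℂ := star V *ᵥ v with hw
    have hVw : V *ᵥ w = v := by
      rw [hw, Matrix.mulVec_mulVec, h2, Matrix.one_mulVec]
    have hDw : Matrix.diagonal (fun i => (lam i : ℂ)) *ᵥ w = (lam j : ℂ) • w := by
      rw [← hdiag, hw, Matrix.mulVec_mulVec]
      have e : star V * H * V * star V = star V * H := by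
        rw [Matrix.mul_assoc (star V * H), h2, Matrix.mul_one]
      rw [e, ← Matrix.mulVec_mulVec, hv, Matrix.mulVec_smul]
    have hwz : ∀ i, i ≠ j → w i = 0 := by
      intro i hij
      have hthis := congrFun hDw i
      rw [Matrix.mulVec_diagonal] at hthis
      have hne : (lam i : ℂ) ≠ (lam j : ℂ) := by
        intro h; exact hij (huniq i (by exact_mod_cast h))
      have hmul0 : ((lam i : ℂ) - (lam j : ℂ)) * w i = 0 := by
        have : (lam j : ℂ) • w i = (lam j : ℂ) * w i := rfl
        simp only [Pi.smul_apply, smul_eq_mul] at hthis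
        linear_combination hthis
      rcases mul_eq_zero.mp hmul0 with h | h
      · exact absurd (sub_eq_zero.mp h) hne
      · exact h
    refine ⟨w j, ?_⟩
    have hwps : w = w j • (Pi.single j 1 : Fin m → ℂ) := by
      funext i
      by_cases hij : i = j
      · subst hij; simp
      · simp [Pi.single_eq_of_ne hij, hwz i hij]
    have hVs : V *ᵥ (w j • (Pi.single j 1 : Fin m → ℂ)) = w j • u j := by
      rw [Matrix.mulVec_smul]
      congr 1
      exact hH.eigenvectorUnitary_mulVec j
    calc v = V *ᵥ w := hVw.symm
      _ = V *ᵥ (w j • (Pi.single j 1 : Fin m → ℂ)) := by rw [← hwps]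
      _ = w j • u j := hVs
  -- vanishing of problematic entries
  have hMY : ∀ p q, (cmap Y) q p = -(cmap Y) p q := by
    intro p q; simp [cmap, hYskew p q]
  have vanish : ∀ j k : Fin m, lam k = -lam j → (∀ i : Fin m, lam i = lam j → i = j) →
      Y' j k = 0 := by
    intro j k hlk huniq
    set cv : Fin m → ℂ := fun i => (starRingEnd ℂ) (u j i) with hcvdef
    set v : Fin m → ℂ := fun i => (starRingEnd ℂ) (u k i) with hvdef
    have hconjH : ∀ p q, (starRingEnd ℂ) (H p q) = -H p q := by
      intro p q
      simp [hHdef, cmap, Matrix.smul_apply, Matrix.map_apply, Complex.conj_I]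
    have hHv : H *ᵥ v = (lam j : ℂ) • v := by
      funext i
      show (H *ᵥ v) i = ((lam j : ℂ) • v) i
      rw [Pi.smul_apply, smul_eq_mul]
      have e1 : (H *ᵥ v) i = ∑ p, H i p * v p := rfl
      have e2 : (H *ᵥ u k) i = ∑ p, H i p * u k p := rfl
      have e3 : (H *ᵥ u k) i = (lam k : ℂ) * u k i := by
        rw [hHu k]; rfl
      calc (H *ᵥ v) i = ∑ p, H i p * v p := e1
        _ = ∑ p, (starRingEnd ℂ) (-(H i p * u k p)) := by
            apply Finset.sum_congr rfl; intro p _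
            rw [map_neg, _root_.map_mul, hconjH]
            simp [hvdef]
        _ = (starRingEnd ℂ) (∑ p, -(H i p * u k p)) :=
            (map_sum (starRingEnd ℂ) _ _).symm
        _ = (starRingEnd ℂ) (-((lam k : ℂ) * u k i)) := by
            rw [Finset.sum_neg_distrib, ← e2, e3]
        _ = (lam j : ℂ) * v i := by
            rw [map_neg, _root_.map_mul, Complex.conj_ofReal, hlk]
            have : v i = (starRingEnd ℂ) (u k i) := rfl
            rw [this]
            push_cast
            ring
    obtain ⟨cc, hcc⟩ := eig_unique j v huniq hHv
    have huk : ∀ i, u k i = (starRingEnd ℂ) cc * cv i := by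
      intro i
      have h := congrFun hcc i
      have : v i = cc * u j i := by simpa using h
      have := congrArg (starRingEnd ℂ) this
      simpa [hvdef, hcvdef] using this
    have hzero : ∑ p, ∑ q, (cmap Y) p q * (cv p * cv q) = 0 :=
      antisym_quad_zero (cmap Y) hMY cv
    calc Y' j k = ∑ q, (∑ p, (starRingEnd ℂ) (V p j) * (cmap Y) p q) * V q k := by
          simp [hY'def, Matrix.mul_apply, Matrix.star_apply, Finset.sum_mul]
      _ = (starRingEnd ℂ) cc * ∑ q, ∑ p, (cmap Y) p q * (cv p * cv q) := by
          rw [Finset.mul_sum]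
          apply Finset.sum_congr rfl; intro q _
          rw [Finset.sum_mul, Finset.mul_sum]
          apply Finset.sum_congr rfl; intro p _
          rw [hVu p j, hVu q k, huk q]
          simp only [hcvdef]
          ring
      _ = (starRingEnd ℂ) cc * ∑ p, ∑ q, (cmap Y) p q * (cv p * cv q) := by
          rw [Finset.sum_comm]
      _ = 0 := by rw [hzero, mul_zero]
  -- pointwise spectral bound
  set Slam : ℝ := ∑ i, lam i ^ 2 with hSlamdef
  have pointwise : ∀ j k : Fin m, (lam j - lam k) ^ 2 * Complex.normSq (Y' j k)
      ≤ Slam * Complex.normSq (Y' j k) := by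
    intro j k
    by_cases h0 : Y' j k = 0
    · simp [h0]
    have hSge : (lam j - lam k) ^ 2 ≤ Slam := by
      by_cases hjk : j = k
      · subst hjk
        have hz : (lam j - lam j) ^ 2 = 0 := by ring
        rw [hz]
        exact Finset.sum_nonneg fun i _ => sq_nonneg _
      set a : ℝ := lam j with ha
      set b : ℝ := lam k with hb
      rcases le_or_gt 0 (a * b) with hab | hab
      · have h2s := sum_sq_two lam hjk
        rw [← ha, ← hb] at h2s
        nlinarith
      · have hane : a ≠ 0 := by intro h; rw [h] at hab; simp at hab
        have hbne : b ≠ 0 := by intro h; rw [h] at hab; simp at hab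
        have habne : a ≠ b := by intro h; rw [h] at hab; nlinarith [sq_nonneg b]
        by_cases hba : b = -a
        · by_cases hcard : 1 < (univ.filter (fun i => lam i = a)).card
          · obtain ⟨j'', hj''mem, hj''ne⟩ := Finset.exists_mem_ne hcard j
            have hj''lam : lam j'' = a := (Finset.mem_filter.mp hj''mem).2
            have hcard2 : 1 < (univ.filter (fun i => lam i = -a)).card := by
              rw [← hpair a]; exact hcard
            obtain ⟨k'', hk''mem, hk''ne⟩ := Finset.exists_mem_ne hcard2 k
            have hk''lam : lam k'' = -a := (Finset.mem_filter.mp hk''mem).2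
            have hana : a ≠ -a := by intro h; apply hane; linarith
            have h32 : j'' ≠ k := by
              intro h; rw [h] at hj''lam; rw [← hb] at hj''lam
              exact hana (by linarith [hj''lam, hba])
            have h41 : k'' ≠ j := by
              intro h; rw [h] at hk''lam; rw [← ha] at hk''lam
              exact hana (by linarith)
            have h43 : k'' ≠ j'' := by
              intro h; rw [h, hj''lam] at hk''lam
              exact hana hk''lam
            have hs4 := sum_sq_four lam hjk hj''ne h32 h41 hk''ne h43
            rw [← ha, ← hb, hj''lam, hk''lam] at hs4
            rw [hba] at hs4 ⊢
            nlinarith [hs4]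
          · exfalso
            have hjmem : j ∈ univ.filter (fun i => lam i = a) := by
              simp [Finset.mem_filter, ha]
            have hle : 1 ≤ (univ.filter (fun i => lam i = a)).card :=
              Finset.card_pos.mpr ⟨j, hjmem⟩
            have hcard1 : (univ.filter (fun i => lam i = a)).card = 1 :=
              le_antisymm (not_lt.mp hcard) hle
            obtain ⟨x, hx⟩ := Finset.card_eq_one.mp hcard1
            have huniq : ∀ i, lam i = lam j → i = j := by
              intro i hi
              have hix : i ∈ univ.filter (fun i => lam i = a) := by
                simp [Finset.mem_filter, hi, ha]
              rw [hx] at hix hjmem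
              rw [Finset.mem_singleton.mp hix, Finset.mem_singleton.mp hjmem]
            exact h0 (vanish j k (by rw [ha, hb] at hba; exact hba) huniq)
        · -- b ≠ -a
          have hc1 : 0 < (univ.filter (fun i => lam i = -a)).card := by
            rw [← hpair a]
            apply Finset.card_pos.mpr ⟨j, _⟩
            simp [Finset.mem_filter, ha]
          obtain ⟨j', hj'mem⟩ := Finset.card_pos.mp hc1
          have hj'lam : lam j' = -a := (Finset.mem_filter.mp hj'mem).2
          have hc2 : 0 < (univ.filter (fun i => lam i = -b)).card := by
            rw [← hpair b]
            apply Finset.card_pos.mpr ⟨k, _⟩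
            simp [Finset.mem_filter, hb]
          obtain ⟨k', hk'mem⟩ := Finset.card_pos.mp hc2
          have hk'lam : lam k' = -b := (Finset.mem_filter.mp hk'mem).2
          have hana : a ≠ -a := by intro h; apply hane; linarith
          have hbnb : b ≠ -b := by intro h; apply hbne; linarith
          have h31 : j' ≠ j := by
            intro h; rw [h, ← ha] at hj'lam; exact hana hj'lam
          have h32 : j' ≠ k := by
            intro h; rw [h, ← hb] at hj'lam
            exact hba (by linarith)
          have h41 : k' ≠ j := by
            intro h; rw [h, ← ha] at hk'lam
            exact hba (by linarith)
          have h42 : k' ≠ k := by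
            intro h; rw [h, ← hb] at hk'lam; exact hbnb hk'lam
          have h43 : k' ≠ j' := by
            intro h; rw [h, hj'lam] at hk'lam
            exact habne (by linarith)
          have hs4 := sum_sq_four lam hjk h31 h32 h41 h42 h43
          rw [← ha, ← hb, hj'lam, hk'lam] at hs4
          nlinarith [hs4, sq_nonneg (a + b)]
    exact mul_le_mul_of_nonneg_right hSge (Complex.normSq_nonneg _)
  -- assembly
  have hfrobY' : frobC Y' = frobC (cmap Y) := frobC_unitary_conj V hV (cmap Y)
  have hfrobXc : frobC (cmap X) = Slam := by
    rw [← frobC_unitary_conj V hV (cmap X)]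
    rw [← hX'def, hfrobX']
  have hZinv : frobC (cmap (X * Y - Y * X)) = frobC (X' * Y' - Y' * X') := by
    rw [← hcomm, frobC_unitary_conj V hV]
  calc frobC (cmap (X * Y - Y * X))
      = ∑ j, ∑ k, (lam j - lam k) ^ 2 * Complex.normSq (Y' j k) := by
        rw [hZinv, hfrobZ]
    _ ≤ ∑ j, ∑ k, Slam * Complex.normSq (Y' j k) := by
        apply Finset.sum_le_sum; intro j _
        apply Finset.sum_le_sum; intro k _
        exact pointwise j k
    _ = Slam * frobC Y' := by
        unfold frobC
        rw [Finset.mul_sum]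
        apply Finset.sum_congr rfl; intro j _
        rw [Finset.mul_sum]
    _ = frobC (cmap X) * frobC (cmap Y) := by
        rw [hfrobXc, hfrobY']



lemma frobC_cmap (X : Matrix (Fin m) (Fin m) ℝ) :
    frobC (cmap X) = ∑ i, ∑ j, (X i j) ^ 2 := by
  unfold frobC
  apply Finset.sum_congr rfl; intro i _
  apply Finset.sum_congr rfl; intro j _
  simp [cmap, Complex.normSq_ofReal, sq]

lemma gInner_self (X : Matrix (Fin m) (Fin m) ℝ) (hX : Xᵀ = -X) :
    gInner X X = (1/2) * ∑ i, ∑ j, (X i j) ^ 2 := by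
  have hXskew : ∀ p q, X q p = -X p q := fun p q => by
    have := congrFun (congrFun hX p) q
    simpa [Matrix.transpose_apply] using this
  unfold gInner
  have htr : (X * X).trace = -∑ i, ∑ j, (X i j) ^ 2 := by
    rw [Matrix.trace]
    rw [← Finset.sum_neg_distrib]
    apply Finset.sum_congr rfl; intro i _
    rw [Matrix.diag_apply, Matrix.mul_apply, ← Finset.sum_neg_distrib]
    apply Finset.sum_congr rfl; intro j _
    rw [hXskew j i]
    ring
  rw [htr]
  ring

end SkewCommAux

/-- For all real skew-symmetric `m×m` matrices `X`, `Y`, the commutator satisfies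
`|XY − YX| ≤ √2·|X|·|Y|`. -/
theorem commutator_norm_le_sqrt_two_mul (m : ℕ) (hm : 1 ≤ m)
    (X Y : Matrix (Fin m) (Fin m) ℝ) (hX : Xᵀ = -X) (hY : Yᵀ = -Y) :
    gNorm (X * Y - Y * X) ≤ Real.sqrt 2 * gNorm X * gNorm Y := by
  open SkewCommAux in
  have hZ : (X * Y - Y * X)ᵀ = -(X * Y - Y * X) := by
    rw [Matrix.transpose_sub, Matrix.transpose_mul, Matrix.transpose_mul, hX, hY]
    simp [Matrix.mul_neg, Matrix.neg_mul]
  set SX : ℝ := ∑ i, ∑ j, (X i j) ^ 2 with hSX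
  set SY : ℝ := ∑ i, ∑ j, (Y i j) ^ 2 with hSY
  set SZ : ℝ := ∑ i, ∑ j, ((X * Y - Y * X) i j) ^ 2 with hSZ
  have hSXnn : 0 ≤ SX := Finset.sum_nonneg fun i _ => Finset.sum_nonneg fun j _ => sq_nonneg _
  have hSYnn : 0 ≤ SY := Finset.sum_nonneg fun i _ => Finset.sum_nonneg fun j _ => sq_nonneg _
  have hkey : SZ ≤ SX * SY := by
    have := SkewCommAux.key X Y hX hY
    rwa [frobC_cmap, frobC_cmap, frobC_cmap] at this
  have e1 : gNorm (X * Y - Y * X) = Real.sqrt ((1/2) * SZ) := by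
    unfold gNorm
    rw [gInner_self _ hZ]
  have e2 : gNorm X = Real.sqrt ((1/2) * SX) := by
    unfold gNorm; rw [gInner_self _ hX]
  have e3 : gNorm Y = Real.sqrt ((1/2) * SY) := by
    unfold gNorm; rw [gInner_self _ hY]
  rw [e1, e2, e3]
  rw [← Real.sqrt_mul (by norm_num : (0:ℝ) ≤ 2), ← Real.sqrt_mul (by positivity)]
  apply Real.sqrt_le_sqrt
  nlinarith [hkey, hSXnn, hSYnn]
end

section
/- Let n = 4. For every 𝔤-valued 2-form F and every 𝔤-valued 1-form A, |⟨[F,A], A⟩| ≤ √3·|F|·|A|². -/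
open Matrix Finset

open scoped ComplexConjugate

noncomputable def frobC {l k : ℕ} (M : Matrix (Fin l) (Fin k) ℂ) : ℝ :=
  ∑ i, ∑ j, Complex.normSq (M i j)

noncomputable def frobR {l k : ℕ} (M : Matrix (Fin l) (Fin k) ℝ) : ℝ :=
  ∑ i, ∑ j, (M i j)^2

noncomputable def nv {m : ℕ} (v : Fin m → ℂ) : ℝ := ∑ i, Complex.normSq (v i)

lemma frobC_nonneg {l k : ℕ} (M : Matrix (Fin l) (Fin k) ℂ) : 0 ≤ frobC M :=
  Finset.sum_nonneg fun _ _ => Finset.sum_nonneg fun _ _ => Complex.normSq_nonneg _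

lemma trace_conjTranspose_mul {l k : ℕ} (M : Matrix (Fin l) (Fin k) ℂ) :
    (Mᴴ * M).trace = (frobC M : ℂ) := by
  simp only [trace, diag_apply, mul_apply, conjTranspose_apply, frobC]
  push_cast
  rw [Finset.sum_comm]
  refine Finset.sum_congr rfl fun i _ => Finset.sum_congr rfl fun j _ => ?_
  rw [Complex.normSq_eq_conj_mul_self]; rfl

lemma frobC_eq_re_trace {l k : ℕ} (M : Matrix (Fin l) (Fin k) ℂ) :
    frobC M = ((Mᴴ * M).trace).re := by
  rw [trace_conjTranspose_mul]; simp

lemma nv_nonneg {m : ℕ} (v : Fin m → ℂ) : 0 ≤ nv v :=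
  Finset.sum_nonneg fun _ _ => Complex.normSq_nonneg _

lemma star_dot_self {m : ℕ} (v : Fin m → ℂ) : star v ⬝ᵥ v = (nv v : ℂ) := by
  simp only [dotProduct, Pi.star_apply, nv]
  push_cast
  refine Finset.sum_congr rfl fun i _ => ?_
  rw [Complex.normSq_eq_conj_mul_self]; rfl

lemma nv_eq_zero_iff {m : ℕ} (v : Fin m → ℂ) : nv v = 0 ↔ v = 0 := by
  constructor
  · intro h
    have := (Finset.sum_eq_zero_iff_of_nonneg (fun i _ => Complex.normSq_nonneg (v i))).1 h
    funext i
    simpa [Complex.normSq_eq_zero] using this i (Finset.mem_univ i)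
  · intro h; simp [h, nv]

lemma nv_smul {m : ℕ} (c : ℂ) (v : Fin m → ℂ) : nv (c • v) = Complex.normSq c * nv v := by
  simp [nv, Complex.normSq_mul, Finset.mul_sum]

lemma nv_star {m : ℕ} (v : Fin m → ℂ) : nv (star v) = nv v := by
  simp [nv, Complex.normSq_conj]
lemma frobC_mul_eq {m r : ℕ} (M : Matrix (Fin m) (Fin m) ℂ) (N : Matrix (Fin m) (Fin r) ℂ) :
    (frobC (M * N) : ℂ) = (Mᴴ * M * (N * Nᴴ)).trace := by
  rw [← trace_conjTranspose_mul, conjTranspose_mul]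
  rw [show Nᴴ * Mᴴ * (M * N) = Nᴴ * (Mᴴ * M * N) by simp only [Matrix.mul_assoc]]
  rw [Matrix.trace_mul_comm]
  simp only [Matrix.mul_assoc]

lemma frobC_col_le {m r : ℕ} (M : Matrix (Fin m) (Fin m) ℂ) (Z : Matrix (Fin m) (Fin r) ℂ)
    (E : Matrix (Fin r) (Fin r) ℂ) (hE : Zᴴ * Z = E) (hZE : Z * E = Z) :
    frobC (M * Z) ≤ frobC M := by
  set P := Z * Zᴴ with hP
  have hPP : P * P = P := by
    calc Z * Zᴴ * (Z * Zᴴ) = Z * (Zᴴ * Z) * Zᴴ := by simp only [Matrix.mul_assoc]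
    _ = Z * Zᴴ := by rw [hE, hZE]
  have hPH : Pᴴ = P := by simp [hP, conjTranspose_mul, Matrix.mul_assoc]
  have h1 : (frobC (M * Z) : ℂ) = (Mᴴ * M * P).trace := frobC_mul_eq M Z
  have h3 : (frobC (M * (1 - P)) : ℂ) = (Mᴴ * M * (1 - P)).trace := by
    rw [frobC_mul_eq]
    congr 2
    have : (1 - P)ᴴ = 1 - P := by simp [conjTranspose_sub, hPH]
    simp [this, Matrix.sub_mul, Matrix.mul_sub, hPP]
  have hsum : (frobC (M * Z) : ℂ) + (frobC (M * (1 - P)) : ℂ) = (frobC M : ℂ) := by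
    rw [h1, h3, ← Matrix.trace_add, ← Matrix.mul_add, add_sub_cancel, Matrix.mul_one,
      trace_conjTranspose_mul]
  have hsum' : frobC (M * Z) + frobC (M * (1 - P)) = frobC M := by exact_mod_cast hsum
  have := frobC_nonneg (M * (1 - P))
  linarith

lemma frobC_mul_cols {m r : ℕ} (M : Matrix (Fin m) (Fin m) ℂ) (z : Fin r → (Fin m → ℂ)) :
    frobC (M * Matrix.of (fun i k => z k i)) = ∑ k, nv (M *ᵥ z k) := by
  rw [frobC, Finset.sum_comm]
  refine Finset.sum_congr rfl fun k _ => ?_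
  refine Finset.sum_congr rfl fun i _ => ?_
  congr 1

lemma bessel_bound {m r : ℕ} (M : Matrix (Fin m) (Fin m) ℂ) (z : Fin r → (Fin m → ℂ))
    (horth : ∀ k l, k ≠ l → star (z k) ⬝ᵥ z l = 0)
    (hunit : ∀ k, star (z k) ⬝ᵥ z k = 1 ∨ z k = 0) :
    ∑ k, nv (M *ᵥ z k) ≤ frobC M := by
  set Z : Matrix (Fin m) (Fin r) ℂ := Matrix.of (fun i k => z k i) with hZdef
  set E : Matrix (Fin r) (Fin r) ℂ := Matrix.diagonal (fun k => star (z k) ⬝ᵥ z k) with hEdef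
  have hE : Zᴴ * Z = E := by
    ext k l
    by_cases h : k = l
    · subst h
      simp [hZdef, hEdef, mul_apply, conjTranspose_apply, Matrix.diagonal, dotProduct,
        mul_comm]
    · have h0 := horth k l h
      simp only [dotProduct, Pi.star_apply] at h0
      rw [hEdef]
      rw [Matrix.diagonal_apply_ne _ h]
      simpa [hZdef, mul_apply, conjTranspose_apply] using h0
  have hZE : Z * E = Z := by
    ext i k
    rw [hEdef, Matrix.mul_diagonal]
    rcases hunit k with h | h
    · rw [h, mul_one]
    · simp [hZdef, h]
  rw [← frobC_mul_cols]
  exact frobC_col_le M Z E hE hZE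
section Herm

variable {m : ℕ} (M : Matrix (Fin m) (Fin m) ℂ)

lemma herm_dot_mulVec (hM : M.IsHermitian) (u v : Fin m → ℂ) :
    star u ⬝ᵥ (M *ᵥ v) = star (M *ᵥ u) ⬝ᵥ v := by
  rw [Matrix.star_mulVec, hM.eq, Matrix.dotProduct_mulVec]

lemma eig_orth (hM : M.IsHermitian) {u v : Fin m → ℂ} {μ ν : ℝ}
    (hu : M *ᵥ u = (μ : ℂ) • u) (hv : M *ᵥ v = (ν : ℂ) • v) (hne : μ ≠ ν) :
    star u ⬝ᵥ v = 0 := by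
  have h1 : star u ⬝ᵥ (M *ᵥ v) = (ν : ℂ) * (star u ⬝ᵥ v) := by
    rw [hv, dotProduct_smul, smul_eq_mul]
  have h2 : star u ⬝ᵥ (M *ᵥ v) = (μ : ℂ) * (star u ⬝ᵥ v) := by
    rw [herm_dot_mulVec M hM, hu, star_smul, smul_dotProduct, smul_eq_mul]
    congr 1
    simp [Complex.conj_ofReal]
  have hd : ((μ : ℂ) - ν) * (star u ⬝ᵥ v) = 0 := by
    rw [sub_mul, ← h2, ← h1, sub_self]
  rcases mul_eq_zero.1 hd with h | h
  · exfalso; apply hne; have : (μ : ℂ) = ν := by linear_combination h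
    exact_mod_cast this
  · exact h

lemma mulVec_star_conj (hL : ∀ i j, conj (M i j) = - M i j) (v : Fin m → ℂ) :
    M *ᵥ (star v) = - star (M *ᵥ v) := by
  funext i
  have h1 : (-(star (M *ᵥ v))) i = ∑ j, -(conj (M i j) * conj (v j)) := by
    show -(conj ((M *ᵥ v) i)) = _
    rw [show (M *ᵥ v) i = ∑ j, M i j * v j from rfl, map_sum, Finset.sum_neg_distrib, neg_inj]
    exact Finset.sum_congr rfl fun j _ => map_mul _ _ _
  rw [h1]
  show (∑ j, M i j * (star v) j) = _
  refine Finset.sum_congr rfl fun j _ => ?_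
  rw [show (star v) j = conj (v j) from rfl, hL i j]
  ring

lemma t_vanish (hM : M.IsHermitian) (hL : ∀ i j, conj (M i j) = - M i j) (v : Fin m → ℂ) :
    star v ⬝ᵥ (M *ᵥ star v) = 0 := by
  have h1 : star v ⬝ᵥ (M *ᵥ star v) = - conj (v ⬝ᵥ (M *ᵥ v)) := by
    rw [mulVec_star_conj M hL v]
    simp [dotProduct, map_sum, mul_comm]
  have h2 : star v ⬝ᵥ (M *ᵥ star v) = conj (v ⬝ᵥ (M *ᵥ v)) := by
    rw [herm_dot_mulVec M hM]
    simp [dotProduct, map_sum, mul_comm]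
  have h3 : conj (v ⬝ᵥ (M *ᵥ v)) = 0 := by
    have h4 := h2.symm.trans h1
    linear_combination ((1:ℂ)/2) * h4
  rw [h2, h3]

end Herm
lemma star_dot_flip {m : ℕ} (u v : Fin m → ℂ) : star v ⬝ᵥ u = conj (star u ⬝ᵥ v) := by
  simp only [dotProduct, Pi.star_apply, map_sum]
  refine Finset.sum_congr rfl fun i _ => ?_
  rw [show (star (u i) * v i : ℂ) = conj (u i) * v i from rfl, _root_.map_mul,
    Complex.conj_conj]
  rw [show (star (v i) : ℂ) = conj (v i) from rfl]
  ring

lemma nv_eig {m : ℕ} {M : Matrix (Fin m) (Fin m) ℂ} {u : Fin m → ℂ} {μ : ℝ}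
    (h : M *ᵥ u = (μ : ℂ) • u) : nv (M *ᵥ u) = μ ^ 2 * nv u := by
  rw [h, nv_smul]
  congr 1
  rw [Complex.normSq_ofReal, sq]

lemma frobC_map_real {l k : ℕ} (X : Matrix (Fin l) (Fin k) ℝ) :
    frobC (X.map (fun x => (x : ℂ))) = frobR X := by
  simp [frobC, frobR, Complex.normSq_ofReal, sq]

lemma frobC_neg {l k : ℕ} (M : Matrix (Fin l) (Fin k) ℂ) : frobC (-M) = frobC M := by
  simp [frobC]

lemma frobC_I_smul {l k : ℕ} (M : Matrix (Fin l) (Fin k) ℂ) :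
    frobC (Complex.I • M) = frobC M := by
  simp [frobC, Complex.normSq_mul]

lemma frobC_conjTranspose {l k : ℕ} (M : Matrix (Fin l) (Fin k) ℂ) :
    frobC (Mᴴ) = frobC M := by
  rw [frobC, Finset.sum_comm]
  simp [conjTranspose_apply, Complex.normSq_conj, frobC]

lemma frobC_mul_unitary_right {m : ℕ} (N U : Matrix (Fin m) (Fin m) ℂ)
    (hUU : U * Uᴴ = 1) : frobC (N * U) = frobC N := by
  have h := frobC_mul_eq N U
  rw [hUU, Matrix.mul_one, trace_conjTranspose_mul] at h
  exact_mod_cast h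

lemma frobC_unitary_conj {m : ℕ} (U M : Matrix (Fin m) (Fin m) ℂ)
    (hUU : U * Uᴴ = 1) : frobC (Uᴴ * M * U) = frobC M := by
  rw [frobC_mul_unitary_right _ U hUU, ← frobC_conjTranspose (Uᴴ * M), conjTranspose_mul,
    conjTranspose_conjTranspose, frobC_mul_unitary_right _ U hUU, frobC_conjTranspose]
lemma dot_star_star {m : ℕ} (u v : Fin m → ℂ) : u ⬝ᵥ star v = conj (star u ⬝ᵥ v) := by
  simp only [dotProduct, Pi.star_apply, map_sum]
  refine Finset.sum_congr rfl fun i _ => ?_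
  rw [show (star (u i) * v i : ℂ) = conj (u i) * v i from rfl, _root_.map_mul,
    Complex.conj_conj]
  rfl

lemma sdot_zero_symm {m : ℕ} {u v : Fin m → ℂ} (h : star u ⬝ᵥ v = 0) :
    star v ⬝ᵥ u = 0 := by
  rw [star_dot_flip u v, h, map_zero]

lemma bessel_four {m : ℕ} (M : Matrix (Fin m) (Fin m) ℂ) (z0 z1 z2 z3 : Fin m → ℂ)
    (u0 : star z0 ⬝ᵥ z0 = 1 ∨ z0 = 0) (u1 : star z1 ⬝ᵥ z1 = 1 ∨ z1 = 0)
    (u2 : star z2 ⬝ᵥ z2 = 1 ∨ z2 = 0) (u3 : star z3 ⬝ᵥ z3 = 1 ∨ z3 = 0)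
    (o01 : star z0 ⬝ᵥ z1 = 0) (o02 : star z0 ⬝ᵥ z2 = 0) (o03 : star z0 ⬝ᵥ z3 = 0)
    (o12 : star z1 ⬝ᵥ z2 = 0) (o13 : star z1 ⬝ᵥ z3 = 0) (o23 : star z2 ⬝ᵥ z3 = 0) :
    nv (M *ᵥ z0) + nv (M *ᵥ z1) + nv (M *ᵥ z2) + nv (M *ᵥ z3) ≤ frobC M := by
  have horth : ∀ k l, k ≠ l → star ((![z0, z1, z2, z3]) k) ⬝ᵥ (![z0, z1, z2, z3]) l = 0 := by
    intro k l hkl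
    fin_cases k <;> fin_cases l <;>
      first
      | exact absurd rfl hkl
      | exact o01
      | exact o02
      | exact o03
      | exact o12
      | exact o13
      | exact o23
      | exact sdot_zero_symm o01
      | exact sdot_zero_symm o02
      | exact sdot_zero_symm o03
      | exact sdot_zero_symm o12
      | exact sdot_zero_symm o13
      | exact sdot_zero_symm o23
  have hunit : ∀ k, star ((![z0, z1, z2, z3]) k) ⬝ᵥ (![z0, z1, z2, z3]) k = 1
      ∨ (![z0, z1, z2, z3]) k = 0 := by
    intro k
    fin_cases k
    · exact u0
    · exact u1
    · exact u2
    · exact u3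
  have hsum := bessel_bound M ![z0, z1, z2, z3] horth hunit
  rw [Fin.sum_univ_four] at hsum
  exact hsum

theorem comm_frob_le {m : ℕ} (X Y : Matrix (Fin m) (Fin m) ℝ)
    (hX : Xᵀ = -X) (hY : Yᵀ = -Y) :
    frobR (X * Y - Y * X) ≤ frobR X * frobR Y := by
  classical
  set Xc : Matrix (Fin m) (Fin m) ℂ := X.map (fun x => (x : ℂ)) with hXcdef
  set Yc : Matrix (Fin m) (Fin m) ℂ := Y.map (fun x => (x : ℂ)) with hYcdef
  set H : Matrix (Fin m) (Fin m) ℂ := Complex.I • Xc with hHdef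
  set L : Matrix (Fin m) (Fin m) ℂ := Complex.I • Yc with hLdef
  have hXent : ∀ i j, X j i = - X i j := by
    intro i j
    have := congrFun (congrFun hX i) j
    simpa [Matrix.transpose_apply] using this
  have hYent : ∀ i j, Y j i = - Y i j := by
    intro i j
    have := congrFun (congrFun hY i) j
    simpa [Matrix.transpose_apply] using this
  have hH : H.IsHermitian := by
    show Hᴴ = H
    ext i j
    simp only [hHdef, conjTranspose_apply, Matrix.smul_apply, hXcdef, Matrix.map_apply,
      smul_eq_mul]
    rw [hXent i j]
    push_cast
    rw [show ∀ z : ℂ, star z = conj z from fun _ => rfl, _root_.map_mul, Complex.conj_I,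
      map_neg, Complex.conj_ofReal]
    ring
  have hLherm : L.IsHermitian := by
    show Lᴴ = L
    ext i j
    simp only [hLdef, conjTranspose_apply, Matrix.smul_apply, hYcdef, Matrix.map_apply,
      smul_eq_mul]
    rw [hYent i j]
    push_cast
    rw [show ∀ z : ℂ, star z = conj z from fun _ => rfl, _root_.map_mul, Complex.conj_I,
      map_neg, Complex.conj_ofReal]
    ring
  have hHconj : ∀ i j, conj (H i j) = - H i j := by
    intro i j
    simp only [hHdef, Matrix.smul_apply, hXcdef, Matrix.map_apply, smul_eq_mul, _root_.map_mul,
      Complex.conj_I, Complex.conj_ofReal]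
    ring
  have hLconj : ∀ i j, conj (L i j) = - L i j := by
    intro i j
    simp only [hLdef, Matrix.smul_apply, hYcdef, Matrix.map_apply, smul_eq_mul, _root_.map_mul,
      Complex.conj_I, Complex.conj_ofReal]
    ring
  set h : Fin m → ℝ := hH.eigenvalues with hhdef
  set w : Fin m → (Fin m → ℂ) := fun j => ⇑(hH.eigenvectorBasis j) with hwdef
  have hw : ∀ j, H *ᵥ w j = ((h j : ℝ) : ℂ) • w j := by
    intro j
    have := hH.mulVec_eigenvectorBasis j
    rw [hwdef]
    rw [this]
    funext i
    simp [Pi.smul_apply, Complex.real_smul, hhdef]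
  have hdot : ∀ i j, star (w i) ⬝ᵥ w j = if i = j then 1 else 0 := by
    intro i j
    have := orthonormal_iff_ite.mp hH.eigenvectorBasis.orthonormal i j
    simpa [PiLp.inner_apply, RCLike.inner_apply, dotProduct, hwdef, mul_comm] using this
  set U : Matrix (Fin m) (Fin m) ℂ := (hH.eigenvectorUnitary : Matrix (Fin m) (Fin m) ℂ)
    with hUdef
  have hU2 : U * Uᴴ = 1 := by
    have := hH.eigenvectorUnitary.2
    rw [Matrix.mem_unitaryGroup_iff] at this
    simpa [Matrix.star_eq_conjTranspose] using this
  set D : Matrix (Fin m) (Fin m) ℂ := Matrix.diagonal (fun a => ((h a : ℝ) : ℂ)) with hDdef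
  have hspec : Uᴴ * H * U = D := by
    have := hH.conjStarAlgAut_star_eigenvectorUnitary
    rw [Unitary.conjStarAlgAut_star_apply, Matrix.star_eq_conjTranspose] at this
    exact this
  set K : Matrix (Fin m) (Fin m) ℂ := Uᴴ * L * U with hKdef
  have mulconj : ∀ A B : Matrix (Fin m) (Fin m) ℂ,
      (Uᴴ * A * U) * (Uᴴ * B * U) = Uᴴ * (A * B) * U := by
    intro A B
    calc (Uᴴ * A * U) * (Uᴴ * B * U) = Uᴴ * A * (U * Uᴴ) * (B * U) := by
          simp only [Matrix.mul_assoc]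
      _ = Uᴴ * (A * B) * U := by
          rw [hU2, Matrix.mul_one]
          simp only [Matrix.mul_assoc]
  have key : Uᴴ * (H * L - L * H) * U = D * K - K * D := by
    rw [Matrix.mul_sub, Matrix.sub_mul, ← mulconj H L, ← mulconj L H, hspec]
  have hws : ∀ j, H *ᵥ star (w j) = ((-(h j) : ℝ) : ℂ) • star (w j) := by
    intro j
    rw [mulVec_star_conj H hHconj (w j), hw j, star_smul]
    rw [show (star ((h j : ℝ) : ℂ)) = ((h j : ℝ) : ℂ) from by
      simp [Complex.star_def, Complex.conj_ofReal]]
    push_cast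
    rw [neg_smul]
  have hnv : ∀ j, nv (w j) = 1 := by
    intro j
    have h1 := hdot j j
    rw [star_dot_self] at h1
    rw [if_pos rfl] at h1
    exact_mod_cast h1
  have hKent : ∀ a b, K a b = star (w a) ⬝ᵥ (L *ᵥ w b) := by
    intro a b
    have hUw : ∀ i a, U i a = w a i := by
      intro i a
      rw [hUdef, hwdef]
      rfl
    rw [hKdef]
    simp only [mul_apply, conjTranspose_apply, dotProduct, mulVec, Pi.star_apply,
      Finset.sum_mul, Finset.mul_sum]
    rw [Finset.sum_comm]
    refine Finset.sum_congr rfl fun i _ => Finset.sum_congr rfl fun j _ => ?_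
    rw [hUw i a, hUw j b]
    ring
  have hfrobH : frobC H = ∑ c, (h c)^2 := by
    have h1 : frobC D = ∑ c, (h c)^2 := by
      rw [frobC]
      refine Finset.sum_congr rfl fun a _ => ?_
      rw [Finset.sum_eq_single a]
      · rw [hDdef]
        rw [show (Matrix.diagonal fun a => ((h a : ℝ) : ℂ)) a a = ((h a : ℝ) : ℂ) from
          Matrix.diagonal_apply_eq _ a]
        rw [Complex.normSq_ofReal, sq]
      · intro b _ hb
        rw [hDdef, Matrix.diagonal_apply_ne' _ hb, Complex.normSq_zero]
      · intro hb
        exact absurd (Finset.mem_univ a) hb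
    rw [← h1, ← hspec, frobC_unitary_conj U H hU2]
  have hfrobK : frobC K = frobR Y := by
    rw [hKdef, frobC_unitary_conj U L hU2, hLdef, frobC_I_smul, hYcdef, frobC_map_real]
  have core : ∀ a b, (h a - h b)^2 * Complex.normSq (K a b)
      ≤ (∑ c, (h c)^2) * Complex.normSq (K a b) := by
    have hsq_nonneg : (0:ℝ) ≤ ∑ c, (h c)^2 := Finset.sum_nonneg fun c _ => sq_nonneg _
    intro a b
    rcases eq_or_ne (K a b) 0 with hK | hK
    · rw [hK]
      simp
    · refine mul_le_mul_of_nonneg_right ?_ (Complex.normSq_nonneg _)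
      by_cases hab : a = b
      · subst hab
        simpa using hsq_nonneg
      · rw [← hfrobH]
        have hfrobH' : (0:ℝ) ≤ frobC H := frobC_nonneg H
        have E_ab : star (w a) ⬝ᵥ w b = 0 := by rw [hdot a b, if_neg hab]
        have E_ba : star (w b) ⬝ᵥ w a = 0 := by rw [hdot b a, if_neg (Ne.symm hab)]
        have hnva : star (w a) ⬝ᵥ w a = 1 := by rw [hdot a a, if_pos rfl]
        have hnvb : star (w b) ⬝ᵥ w b = 1 := by rw [hdot b b, if_pos rfl]
        by_cases hba : h b = -(h a)
        · by_cases ha0 : h a = 0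
          · rw [hba, ha0]
            simpa using hfrobH'
          · -- antipodal case
            set c : ℂ := star (w b) ⬝ᵥ star (w a) with hcdef
            have hc' : star (w a) ⬝ᵥ star (w b) = c := dotProduct_comm _ _
            set x' : Fin m → ℂ := star (w a) - c • w b with hx'def
            set y' : Fin m → ℂ := star (w b) - c • w a with hy'def
            have hx'eig : H *ᵥ x' = ((-(h a) : ℝ) : ℂ) • x' := by
              rw [hx'def, Matrix.mulVec_sub, Matrix.mulVec_smul, hws a, hw b, hba]
              module
            have hy'eig : H *ᵥ y' = ((h a : ℝ) : ℂ) • y' := by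
              rw [hy'def, Matrix.mulVec_sub, Matrix.mulVec_smul, hws b, hw a, hba, neg_neg]
              module
            by_cases hx0 : x' = 0
            · exfalso
              apply hK
              have hstar : star (w a) = c • w b := by
                have h2 := hx0
                rw [hx'def, sub_eq_zero] at h2
                exact h2
              have hcne : c ≠ 0 := by
                intro h0
                rw [h0, zero_smul] at hstar
                have h3 : nv (w a) = 0 := by
                  rw [← nv_star, hstar]
                  simp [nv]
                rw [hnv a] at h3
                norm_num at h3
              have hwb2 : w b = c⁻¹ • star (w a) := by
                rw [hstar, smul_smul, inv_mul_cancel₀ hcne, one_smul]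
              rw [hKent a b, hwb2, Matrix.mulVec_smul, dotProduct_smul, smul_eq_mul,
                t_vanish L hLherm hLconj (w a), mul_zero]
            · by_cases hy0 : y' = 0
              · exfalso
                apply hK
                have hstar : star (w b) = c • w a := by
                  have h2 := hy0
                  rw [hy'def, sub_eq_zero] at h2
                  exact h2
                have hcne : c ≠ 0 := by
                  intro h0
                  rw [h0, zero_smul] at hstar
                  have h3 : nv (w b) = 0 := by
                    rw [← nv_star, hstar]
                    simp [nv]
                  rw [hnv b] at h3
                  norm_num at h3
                have hwa2 : w a = c⁻¹ • star (w b) := by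
                  rw [hstar, smul_smul, inv_mul_cancel₀ hcne, one_smul]
                have hvan : w b ⬝ᵥ (L *ᵥ w b) = 0 := by
                  have h4 := t_vanish L hLherm hLconj (star (w b))
                  rwa [star_star] at h4
                rw [hKent a b, hwa2, star_smul, star_star, smul_dotProduct, smul_eq_mul,
                  hvan, mul_zero]
              · -- both nonzero : 4 orthonormal vectors
                have hnx : nv x' ≠ 0 := fun h0 => hx0 ((nv_eq_zero_iff x').1 h0)
                have hny : nv y' ≠ 0 := fun h0 => hy0 ((nv_eq_zero_iff y').1 h0)
                have hrx : (Real.sqrt (nv x'))⁻¹ * (Real.sqrt (nv x'))⁻¹ * nv x' = 1 := by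
                  rw [← mul_inv, Real.mul_self_sqrt (nv_nonneg x')]
                  exact inv_mul_cancel₀ hnx
                have hry : (Real.sqrt (nv y'))⁻¹ * (Real.sqrt (nv y'))⁻¹ * nv y' = 1 := by
                  rw [← mul_inv, Real.mul_self_sqrt (nv_nonneg y')]
                  exact inv_mul_cancel₀ hny
                set sx : ℂ := (((Real.sqrt (nv x'))⁻¹ : ℝ) : ℂ) with hsxdef
                set sy : ℂ := (((Real.sqrt (nv y'))⁻¹ : ℝ) : ℂ) with hsydef
                have E_aa : star (w a) ⬝ᵥ star (w a) = 0 :=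
                  eig_orth H hH (hw a) (hws a) (fun hcon => ha0 (by linarith))
                have E_bb : star (w b) ⬝ᵥ star (w b) = 0 :=
                  eig_orth H hH (hw b) (hws b) (fun hcon => ha0 (by
                    rw [hba] at hcon; linarith))
                have o01 : star (w a) ⬝ᵥ w b = 0 := E_ab
                have o02 : star (w a) ⬝ᵥ (sx • x') = 0 := by
                  rw [dotProduct_smul, hx'def, dotProduct_sub, dotProduct_smul, E_aa, E_ab]
                  simp
                have o03 : star (w a) ⬝ᵥ (sy • y') = 0 := by
                  rw [dotProduct_smul, hy'def, dotProduct_sub, dotProduct_smul, hc', hnva]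
                  simp
                have o12 : star (w b) ⬝ᵥ (sx • x') = 0 := by
                  rw [dotProduct_smul, hx'def, dotProduct_sub, dotProduct_smul, ← hcdef, hnvb]
                  simp
                have o13 : star (w b) ⬝ᵥ (sy • y') = 0 := by
                  rw [dotProduct_smul, hy'def, dotProduct_sub, dotProduct_smul, E_bb, E_ba]
                  simp
                have o23 : star (sx • x') ⬝ᵥ (sy • y') = 0 := by
                  have hxy : star x' ⬝ᵥ y' = 0 :=
                    eig_orth H hH hx'eig hy'eig (fun hcon => ha0 (by linarith))
                  rw [star_smul, smul_dotProduct, dotProduct_smul, hxy]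
                  simp
                have hstarsx : star sx = sx := by
                  rw [hsxdef]
                  exact Complex.conj_ofReal _
                have hstarsy : star sy = sy := by
                  rw [hsydef]
                  exact Complex.conj_ofReal _
                have u2unit : star (sx • x') ⬝ᵥ (sx • x') = 1 := by
                  rw [star_smul, smul_dotProduct, dotProduct_smul, star_dot_self, hstarsx,
                    smul_eq_mul, smul_eq_mul, hsxdef]
                  have h5 := congrArg (fun t : ℝ => (t : ℂ)) hrx
                  push_cast at h5 ⊢
                  linear_combination h5
                have u3unit : star (sy • y') ⬝ᵥ (sy • y') = 1 := by
                  rw [star_smul, smul_dotProduct, dotProduct_smul, star_dot_self, hstarsy,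
                    smul_eq_mul, smul_eq_mul, hsydef]
                  have h5 := congrArg (fun t : ℝ => (t : ℂ)) hry
                  push_cast at h5 ⊢
                  linear_combination h5
                have hsum := bessel_four H (w a) (w b) (sx • x') (sy • y')
                  (Or.inl hnva) (Or.inl hnvb) (Or.inl u2unit) (Or.inl u3unit)
                  o01 o02 o03 o12 o13 o23
                have e0 : nv (H *ᵥ w a) = (h a)^2 := by
                  rw [nv_eig (hw a), hnv a, mul_one]
                have e1 : nv (H *ᵥ w b) = (h b)^2 := by
                  rw [nv_eig (hw b), hnv b, mul_one]
                have e2 : nv (H *ᵥ (sx • x')) = (h a)^2 := by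
                  rw [Matrix.mulVec_smul, nv_smul, nv_eig hx'eig, hsxdef,
                    Complex.normSq_ofReal, neg_sq]
                  linear_combination (h a)^2 * hrx
                have e3 : nv (H *ᵥ (sy • y')) = (h a)^2 := by
                  rw [Matrix.mulVec_smul, nv_smul, nv_eig hy'eig, hsydef,
                    Complex.normSq_ofReal]
                  linear_combination (h a)^2 * hry
                rw [e0, e1, e2, e3] at hsum
                have hexp : (h a - h b)^2 = h a ^ 2 + h b ^ 2 + h a ^ 2 + h a ^ 2 := by
                  rw [hba]
                  ring
                rw [hexp]
                exact hsum
        · -- generic (non-antipodal) case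
          set u2 : Fin m → ℂ := if h a = 0 then 0 else star (w a) with hu2def
          set u3 : Fin m → ℂ := if h b = 0 then 0 else star (w b) with hu3def
          have o01 : star (w a) ⬝ᵥ w b = 0 := E_ab
          have o02 : star (w a) ⬝ᵥ u2 = 0 := by
            rw [hu2def]
            split_ifs with h0
            · exact dotProduct_zero _
            · exact eig_orth H hH (hw a) (hws a) (fun hcon => h0 (by linarith))
          have o03 : star (w a) ⬝ᵥ u3 = 0 := by
            rw [hu3def]
            split_ifs with h0
            · exact dotProduct_zero _
            · exact eig_orth H hH (hw a) (hws b) (fun hcon => hba (by linarith))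
          have o12 : star (w b) ⬝ᵥ u2 = 0 := by
            rw [hu2def]
            split_ifs with h0
            · exact dotProduct_zero _
            · exact eig_orth H hH (hw b) (hws a) (fun hcon => hba (by linarith))
          have o13 : star (w b) ⬝ᵥ u3 = 0 := by
            rw [hu3def]
            split_ifs with h0
            · exact dotProduct_zero _
            · exact eig_orth H hH (hw b) (hws b) (fun hcon => h0 (by linarith))
          have o23 : star u2 ⬝ᵥ u3 = 0 := by
            rw [hu2def, hu3def]
            split_ifs with h0 h1 h2
            · simp
            · simp
            · simp
            · rw [star_star, dot_star_star, E_ab, map_zero]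
          have hustar : ∀ j, star (star (w j)) ⬝ᵥ star (w j) = 1 := by
            intro j
            rw [star_star, dot_star_star, hdot j j, if_pos rfl]
            simp
          have hu2unit : star u2 ⬝ᵥ u2 = 1 ∨ u2 = 0 := by
            rw [hu2def]
            split_ifs with h0
            · exact Or.inr rfl
            · exact Or.inl (hustar a)
          have hu3unit : star u3 ⬝ᵥ u3 = 1 ∨ u3 = 0 := by
            rw [hu3def]
            split_ifs with h0
            · exact Or.inr rfl
            · exact Or.inl (hustar b)
          have hsum := bessel_four H (w a) (w b) u2 u3
            (Or.inl hnva) (Or.inl hnvb) hu2unit hu3unit o01 o02 o03 o12 o13 o23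
          have e0 : nv (H *ᵥ w a) = (h a)^2 := by
            rw [nv_eig (hw a), hnv a, mul_one]
          have e1 : nv (H *ᵥ w b) = (h b)^2 := by
            rw [nv_eig (hw b), hnv b, mul_one]
          have e2 : nv (H *ᵥ u2) = (h a)^2 := by
            rw [hu2def]
            split_ifs with h0
            · rw [Matrix.mulVec_zero, h0]
              simp [nv]
            · rw [nv_eig (hws a), nv_star, hnv a, mul_one, neg_sq]
          have e3 : nv (H *ᵥ u3) = (h b)^2 := by
            rw [hu3def]
            split_ifs with h0
            · rw [Matrix.mulVec_zero, h0]
              simp [nv]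
            · rw [nv_eig (hws b), nv_star, hnv b, mul_one, neg_sq]
          rw [e0, e1, e2, e3] at hsum
          nlinarith [hsum, sq_nonneg (h a + h b)]
  -- final assembly
  have map_mul' : ∀ (P Q : Matrix (Fin m) (Fin m) ℝ),
      (P * Q).map (fun x => (x : ℂ)) = P.map (fun x => (x : ℂ)) * Q.map (fun x => (x : ℂ)) := by
    intro P Q
    ext i j
    simp only [Matrix.map_apply, mul_apply]
    push_cast
    rfl
  have map_sub' : ∀ (P Q : Matrix (Fin m) (Fin m) ℝ),
      (P - Q).map (fun x => (x : ℂ)) = P.map (fun x => (x : ℂ)) - Q.map (fun x => (x : ℂ)) := by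
    intro P Q
    ext i j
    simp [Matrix.map_apply]
  have hHL : H * L - L * H = -(Xc * Yc - Yc * Xc) := by
    rw [hHdef, hLdef, Matrix.smul_mul, Matrix.mul_smul, smul_smul, Complex.I_mul_I,
      Matrix.smul_mul, Matrix.mul_smul, smul_smul, Complex.I_mul_I, neg_one_smul, neg_one_smul]
    abel
  calc frobR (X * Y - Y * X) = frobC (Xc * Yc - Yc * Xc) := by
        rw [← frobC_map_real (X * Y - Y * X), map_sub' (X*Y) (Y*X), map_mul' X Y, map_mul' Y X,
          ← hXcdef, ← hYcdef]
    _ = frobC (H * L - L * H) := by rw [hHL, frobC_neg]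
    _ = frobC (Uᴴ * (H * L - L * H) * U) := (frobC_unitary_conj U _ hU2).symm
    _ = frobC (D * K - K * D) := by rw [key]
    _ = ∑ a, ∑ b, (h a - h b)^2 * Complex.normSq (K a b) := by
        rw [frobC]
        refine Finset.sum_congr rfl fun a _ => Finset.sum_congr rfl fun b _ => ?_
        rw [Matrix.sub_apply, Matrix.diagonal_mul, Matrix.mul_diagonal]
        rw [show ((h a : ℝ) : ℂ) * K a b - K a b * ((h b : ℝ) : ℂ)
          = ((h a - h b : ℝ) : ℂ) * K a b from by push_cast; ring]
        rw [Complex.normSq_mul, Complex.normSq_ofReal, sq]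
    _ ≤ ∑ a, ∑ b, (∑ c, (h c)^2) * Complex.normSq (K a b) := by
        refine Finset.sum_le_sum fun a _ => Finset.sum_le_sum fun b _ => core a b
    _ = (∑ c, (h c)^2) * frobC K := by
        rw [frobC, Finset.mul_sum]
        exact Finset.sum_congr rfl fun a _ => by rw [Finset.mul_sum]
    _ = frobR X * frobR Y := by
        rw [hfrobK, ← hfrobH, hHdef, frobC_I_smul, hXcdef, frobC_map_real]
lemma trace_mul_skew {k : ℕ} (P Q : Matrix (Fin k) (Fin k) ℝ) (hQ : Qᵀ = -Q) :
    (P * Q).trace = -∑ i, ∑ j, P i j * Q i j := by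
  simp only [trace, diag_apply, mul_apply]
  simp only [← Finset.sum_neg_distrib]
  refine Finset.sum_congr rfl fun i _ => Finset.sum_congr rfl fun j _ => ?_
  have hq : Q j i = -Q i j := by
    have := congrFun (congrFun hQ i) j
    simpa [Matrix.transpose_apply] using this
  rw [hq]
  ring

lemma trace_self_skew {k : ℕ} (Q : Matrix (Fin k) (Fin k) ℝ) (hQ : Qᵀ = -Q) :
    (Q * Q).trace = -frobR Q := by
  rw [trace_mul_skew Q Q hQ, frobR]
  congr 1
  refine Finset.sum_congr rfl fun i _ => Finset.sum_congr rfl fun j _ => ?_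
  rw [sq]

lemma stepA {m : ℕ} (F : Fin 4 → Fin 4 → Matrix (Fin m) (Fin m) ℝ)
    (A : Fin 4 → Matrix (Fin m) (Fin m) ℝ) :
    oneInner (phiAct F A) A = 2 * twoInner F (oneBracket A A) := by
  rw [oneInner, twoInner]
  have hper : ∀ i, ((phiAct F A) i * A i).trace
      = ∑ j, ((F j i * (A j * A i)).trace - (F j i * (A i * A j)).trace) := by
    intro i
    show ((∑ j, (F j i * A j - A j * F j i)) * A i).trace = _
    rw [Matrix.sum_mul, Matrix.trace_sum]
    refine Finset.sum_congr rfl fun j _ => ?_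
    rw [Matrix.sub_mul, Matrix.trace_sub]
    congr 1
    · rw [Matrix.mul_assoc]
    · rw [Matrix.mul_assoc, Matrix.trace_mul_comm, Matrix.mul_assoc]
  have hB : ∀ i j, (F i j * oneBracket A A i j).trace
      = (F i j * (A i * A j)).trace - (F i j * (A j * A i)).trace := by
    intro i j
    show (F i j * (A i * A j - A j * A i)).trace = _
    rw [Matrix.mul_sub, Matrix.trace_sub]
  simp only [hper, hB]
  rw [Finset.sum_comm]
  ring

lemma stepB {n m : ℕ} (R S : Fin n → Fin n → Matrix (Fin m) (Fin m) ℝ)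
    (hR : ∀ i j, (R i j)ᵀ = -(R i j)) (hS : ∀ i j, (S i j)ᵀ = -(S i j)) :
    |twoInner R S| ≤ twoNorm R * twoNorm S := by
  classical
  set f : (Fin n × Fin n) × Fin m × Fin m → ℝ :=
    fun p => R p.1.1 p.1.2 p.2.1 p.2.2 with hf
  set g : (Fin n × Fin n) × Fin m × Fin m → ℝ :=
    fun p => S p.1.1 p.1.2 p.2.1 p.2.2 with hg
  have hconv : ∀ (P Q : Fin n → Fin n → Matrix (Fin m) (Fin m) ℝ),
      (∀ i j, (Q i j)ᵀ = -(Q i j)) →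
      twoInner P Q = (1/4) * ∑ p : (Fin n × Fin n) × Fin m × Fin m,
        P p.1.1 p.1.2 p.2.1 p.2.2 * Q p.1.1 p.1.2 p.2.1 p.2.2 := by
    intro P Q hQ
    rw [twoInner]
    simp only [Fintype.sum_prod_type]
    rw [show ∀ x : ℝ, -(1/4) * x = (1/4) * (-x) from fun x => by ring]
    rw [← Finset.sum_neg_distrib]
    congr 1
    refine Finset.sum_congr rfl fun i _ => ?_
    rw [← Finset.sum_neg_distrib]
    refine Finset.sum_congr rfl fun j _ => ?_
    rw [trace_mul_skew _ _ (hQ i j), neg_neg]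
  have hRS : twoInner R S = (1/4) * ∑ p, f p * g p := hconv R S hS
  have hRR : twoInner R R = (1/4) * ∑ p, f p * f p := hconv R R hR
  have hSS : twoInner S S = (1/4) * ∑ p, g p * g p := hconv S S hS
  have hcs := Finset.sum_mul_sq_le_sq_mul_sq Finset.univ f g
  have habs : |∑ p, f p * g p| ≤
      Real.sqrt (∑ p, f p ^ 2) * Real.sqrt (∑ p, g p ^ 2) := by
    rw [← Real.sqrt_sq_eq_abs, ← Real.sqrt_mul (Finset.sum_nonneg fun p _ => sq_nonneg (f p))]
    exact Real.sqrt_le_sqrt hcs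
  rw [hRS, twoNorm, twoNorm, hRR, hSS, abs_mul]
  rw [show |(1:ℝ)/4| = 1/4 from by norm_num]
  have e1 : Real.sqrt ((1/4) * ∑ p, f p * f p) = (1/2) * Real.sqrt (∑ p, f p ^ 2) := by
    rw [Real.sqrt_mul (by norm_num : (0:ℝ) ≤ 1/4)]
    rw [show Real.sqrt ((1:ℝ)/4) = 1/2 from by
      rw [show (1:ℝ)/4 = (1/2)^2 from by norm_num, Real.sqrt_sq (by norm_num : (0:ℝ) ≤ 1/2)]]
    congr 2
    exact Finset.sum_congr rfl fun p _ => (sq (f p)).symm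
  have e2 : Real.sqrt ((1/4) * ∑ p, g p * g p) = (1/2) * Real.sqrt (∑ p, g p ^ 2) := by
    rw [Real.sqrt_mul (by norm_num : (0:ℝ) ≤ 1/4)]
    rw [show Real.sqrt ((1:ℝ)/4) = 1/2 from by
      rw [show (1:ℝ)/4 = (1/2)^2 from by norm_num, Real.sqrt_sq (by norm_num : (0:ℝ) ≤ 1/2)]]
    congr 2
    exact Finset.sum_congr rfl fun p _ => (sq (g p)).symm
  rw [e1, e2]
  calc (1/4) * |∑ p, f p * g p|
      ≤ (1/4) * (Real.sqrt (∑ p, f p ^ 2) * Real.sqrt (∑ p, g p ^ 2)) := by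
        exact mul_le_mul_of_nonneg_left habs (by norm_num)
    _ = (1/2) * Real.sqrt (∑ p, f p ^ 2) * ((1/2) * Real.sqrt (∑ p, g p ^ 2)) := by ring

/-- For `n = 4`: for every `𝔤`-valued 2-form `F` and 1-form `A`,
`|⟨[F,A], A⟩| ≤ √3·|F|·|A|²`. -/
theorem phiAct_inner_est_dim_four (m : ℕ) (hm : 1 ≤ m)
    (F : Fin 4 → Fin 4 → Matrix (Fin m) (Fin m) ℝ)
    (hFskew : ∀ i j, (F i j)ᵀ = -(F i j))
    (hFalt : ∀ i j, F i j = -(F j i))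
    (A : Fin 4 → Matrix (Fin m) (Fin m) ℝ) (hA : ∀ i, (A i)ᵀ = -(A i)) :
    |oneInner (phiAct F A) A| ≤ Real.sqrt 3 * twoNorm F * oneNorm A ^ 2 := by
  classical
  set B := oneBracket A A with hBdef
  have hBskew : ∀ i j, (B i j)ᵀ = -(B i j) := by
    intro i j
    show (A i * A j - A j * A i)ᵀ = -(A i * A j - A j * A i)
    rw [Matrix.transpose_sub, Matrix.transpose_mul, Matrix.transpose_mul, hA i, hA j]
    noncomm_ring
  -- oneInner A A = (1/2) * ∑ frobR (A i)
  have honeinner : oneInner A A = (1/2) * ∑ i, frobR (A i) := by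
    rw [oneInner]
    rw [show ∀ x : ℝ, -(1/2) * x = (1/2) * (-x) from fun x => by ring]
    rw [← Finset.sum_neg_distrib]
    congr 1
    refine Finset.sum_congr rfl fun i _ => ?_
    rw [trace_self_skew (A i) (hA i), neg_neg]
  have hgnn : ∀ i, 0 ≤ frobR (A i) := by
    intro i
    exact Finset.sum_nonneg fun a _ => Finset.sum_nonneg fun b _ => sq_nonneg _
  have honepos : 0 ≤ oneInner A A := by
    rw [honeinner]
    have := Finset.sum_nonneg (fun i (_ : i ∈ Finset.univ) => hgnn i)
    linarith
  -- twoInner B B bound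
  have htwoBB : twoInner B B ≤ (3/4) * (oneInner A A)^2 := by
    have hBB : twoInner B B = (1/4) * ∑ i, ∑ j, frobR (B i j) := by
      rw [twoInner]
      rw [show ∀ x : ℝ, -(1/4) * x = (1/4) * (-x) from fun x => by ring]
      rw [← Finset.sum_neg_distrib]
      congr 1
      refine Finset.sum_congr rfl fun i _ => ?_
      rw [← Finset.sum_neg_distrib]
      refine Finset.sum_congr rfl fun j _ => ?_
      rw [trace_self_skew (B i j) (hBskew i j), neg_neg]
    have hpair : ∀ i j : Fin 4, frobR (B i j) + (if i = j then frobR (A i) * frobR (A j) else 0)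
        ≤ frobR (A i) * frobR (A j) := by
      intro i j
      by_cases hij : i = j
      · subst hij
        rw [if_pos rfl]
        have : B i i = 0 := by
          show A i * A i - A i * A i = 0
          exact sub_self _
        rw [this]
        simp [frobR]
      · rw [if_neg hij, add_zero]
        exact comm_frob_le (A i) (A j) (hA i) (hA j)
    have hdiag : ∀ i : Fin 4, ∑ j : Fin 4,
        (if i = j then frobR (A i) * frobR (A j) else 0) = frobR (A i) * frobR (A i) := by
      intro i
      rw [Finset.sum_ite_eq]
      rw [if_pos (Finset.mem_univ i)]
    have hsum1 : (∑ i, ∑ j, frobR (B i j)) + ∑ i : Fin 4, frobR (A i) * frobR (A i)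
        ≤ (∑ i : Fin 4, frobR (A i)) * (∑ i : Fin 4, frobR (A i)) := by
      rw [Finset.sum_mul_sum]
      have h1 : ∑ i : Fin 4, ∑ j : Fin 4,
          (frobR (B i j) + (if i = j then frobR (A i) * frobR (A j) else 0))
          ≤ ∑ i : Fin 4, ∑ j : Fin 4, frobR (A i) * frobR (A j) :=
        Finset.sum_le_sum fun i _ => Finset.sum_le_sum fun j _ => hpair i j
      have h2 : ∑ i : Fin 4, ∑ j : Fin 4,
          (frobR (B i j) + (if i = j then frobR (A i) * frobR (A j) else 0))
          = (∑ i, ∑ j, frobR (B i j)) + ∑ i : Fin 4, frobR (A i) * frobR (A i) := by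
        simp only [Finset.sum_add_distrib]
        congr 1
        exact Finset.sum_congr rfl fun i _ => hdiag i
      rw [h2] at h1
      exact h1
    have hcheb : (∑ i : Fin 4, frobR (A i))^2 ≤ 4 * ∑ i : Fin 4, (frobR (A i))^2 := by
      have := sq_sum_le_card_mul_sum_sq
        (s := (Finset.univ : Finset (Fin 4))) (f := fun i => frobR (A i))
      simpa using this
    have hQ : ∑ i : Fin 4, frobR (A i) * frobR (A i) = ∑ i : Fin 4, (frobR (A i))^2 :=
      Finset.sum_congr rfl fun i _ => (sq _).symm
    rw [hBB, honeinner]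
    rw [hQ] at hsum1
    nlinarith [hsum1, hcheb]
  have hCS := stepB F B hFskew hBskew
  have htwoNB : twoNorm B ≤ Real.sqrt 3 / 2 * oneInner A A := by
    rw [twoNorm]
    have hsq : twoInner B B ≤ (Real.sqrt 3 / 2 * oneInner A A)^2 := by
      have h3 : (Real.sqrt 3)^2 = 3 := Real.sq_sqrt (by norm_num)
      calc twoInner B B ≤ (3/4) * (oneInner A A)^2 := htwoBB
        _ = (Real.sqrt 3 / 2 * oneInner A A)^2 := by
            rw [mul_pow, div_pow, h3]
            ring
    calc Real.sqrt (twoInner B B) ≤ Real.sqrt ((Real.sqrt 3 / 2 * oneInner A A)^2) :=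
          Real.sqrt_le_sqrt hsq
      _ = Real.sqrt 3 / 2 * oneInner A A := Real.sqrt_sq
          (mul_nonneg (div_nonneg (Real.sqrt_nonneg 3) (by norm_num)) honepos)
  have htwoNF : 0 ≤ twoNorm F := Real.sqrt_nonneg _
  have honesq : oneNorm A ^ 2 = oneInner A A := by
    rw [oneNorm]
    exact Real.sq_sqrt honepos
  calc |oneInner (phiAct F A) A| = |2 * twoInner F B| := by rw [stepA F A]
    _ = 2 * |twoInner F B| := by
        rw [abs_mul]
        norm_num
    _ ≤ 2 * (twoNorm F * twoNorm B) := by linarith [hCS]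
    _ ≤ 2 * (twoNorm F * (Real.sqrt 3 / 2 * oneInner A A)) := by
        have := mul_le_mul_of_nonneg_left htwoNB htwoNF
        linarith
    _ = Real.sqrt 3 * twoNorm F * oneInner A A := by ring
    _ = Real.sqrt 3 * twoNorm F * oneNorm A ^ 2 := by rw [honesq]
end

section
/- Let Φ be a 𝔤-valued 2-form and suppose γ ≥ 0 is a constant such that |XY − YX| ≤ γ·|X|·|Y| for all X, Y ∈ 𝔤. Then for every 𝔤-valued 1-form A, |⟨[Φ,A], A⟩| ≤ 2γ·√((n−1)/(2n))·|Φ|·|A|². -/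
open Matrix Finset

namespace PhiAux
variable {m n : ℕ}

lemma skew_apply {X : Matrix (Fin m) (Fin m) ℝ} (hX : Xᵀ = -X) (a b : Fin m) :
    X b a = -X a b := by
  have := congrArg (fun M => M a b) hX
  simpa using this

lemma gInner_eq (X Y : Matrix (Fin m) (Fin m) ℝ) (hY : Yᵀ = -Y) :
    gInner X Y = (1/2) * ∑ a, ∑ b, X a b * Y a b := by
  have h : (X * Y).trace = ∑ a, ∑ b, X a b * Y b a := by
    simp [Matrix.trace, Matrix.diag, Matrix.mul_apply]
  rw [gInner, h]
  have h2 : ∀ a b : Fin m, X a b * Y b a = -(X a b * Y a b) := fun a b => by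
    rw [skew_apply hY]; ring
  simp_rw [h2, Finset.sum_neg_distrib]
  ring

lemma gInner_self_nonneg (X : Matrix (Fin m) (Fin m) ℝ) (hX : Xᵀ = -X) :
    0 ≤ gInner X X := by
  rw [gInner_eq X X hX]
  simp_rw [← sq]
  positivity

lemma gNorm_nonneg (X : Matrix (Fin m) (Fin m) ℝ) : 0 ≤ gNorm X := Real.sqrt_nonneg _

lemma gNorm_sq (X : Matrix (Fin m) (Fin m) ℝ) (hX : Xᵀ = -X) :
    gNorm X ^ 2 = gInner X X := Real.sq_sqrt (gInner_self_nonneg X hX)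

lemma abs_gInner_le (X Y : Matrix (Fin m) (Fin m) ℝ) (hX : Xᵀ = -X) (hY : Yᵀ = -Y) :
    |gInner X Y| ≤ gNorm X * gNorm Y := by
  have key : (gInner X Y) ^ 2 ≤ gInner X X * gInner Y Y := by
    rw [gInner_eq X Y hY, gInner_eq X X hX, gInner_eq Y Y hY]
    have e : ∀ Z W : Matrix (Fin m) (Fin m) ℝ,
        ∑ a, ∑ b, Z a b * W a b = ∑ z : Fin m × Fin m, Z z.1 z.2 * W z.1 z.2 := by
      intro Z W; rw [Fintype.sum_prod_type]
    rw [e X Y, e X X, e Y Y]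
    have := Finset.sum_mul_sq_le_sq_mul_sq Finset.univ
      (fun z : Fin m × Fin m => X z.1 z.2) (fun z : Fin m × Fin m => Y z.1 z.2)
    simp_rw [← sq] at this ⊢
    nlinarith [this]
  have h1 : |gInner X Y| = Real.sqrt ((gInner X Y) ^ 2) := (Real.sqrt_sq_eq_abs _).symm
  rw [h1]
  calc Real.sqrt ((gInner X Y) ^ 2) ≤ Real.sqrt (gInner X X * gInner Y Y) :=
        Real.sqrt_le_sqrt key
    _ = gNorm X * gNorm Y := by
        rw [Real.sqrt_mul (gInner_self_nonneg X hX)]; rfl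

lemma comm_skew {X Y : Matrix (Fin m) (Fin m) ℝ} (hX : Xᵀ = -X) (hY : Yᵀ = -Y) :
    (X * Y - Y * X)ᵀ = -(X * Y - Y * X) := by
  simp [Matrix.transpose_sub, Matrix.transpose_mul, hX, hY]

end PhiAux

set_option maxHeartbeats 1000000 in
/-- If `γ ≥ 0` satisfies `|XY − YX| ≤ γ·|X|·|Y|` on `𝔤`, then
`|⟨[Φ,A], A⟩| ≤ 2γ·√((n−1)/(2n))·|Φ|·|A|²`. -/
theorem phiAct_inner_estimate (m n : ℕ) (hm : 1 ≤ m) (hn : 1 ≤ n)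
    (Φ : Fin n → Fin n → Matrix (Fin m) (Fin m) ℝ)
    (hΦskew : ∀ i j, (Φ i j)ᵀ = -(Φ i j))
    (hΦalt : ∀ i j, Φ i j = -(Φ j i))
    (γ : ℝ) (hγ : 0 ≤ γ)
    (hbd : ∀ X Y : Matrix (Fin m) (Fin m) ℝ, Xᵀ = -X → Yᵀ = -Y →
      gNorm (X * Y - Y * X) ≤ γ * gNorm X * gNorm Y)
    (A : Fin n → Matrix (Fin m) (Fin m) ℝ) (hA : ∀ i, (A i)ᵀ = -(A i)) :
    |oneInner (phiAct Φ A) A| ≤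
      2 * γ * Real.sqrt (((n : ℝ) - 1) / (2 * n)) * twoNorm Φ * oneNorm A ^ 2 := by
  classical
  have ha0 : ∀ i, 0 ≤ gNorm (A i) := fun i => PhiAux.gNorm_nonneg _
  have hp0 : ∀ i j, 0 ≤ gNorm (Φ i j) := fun i j => PhiAux.gNorm_nonneg _
  set a : Fin n → ℝ := fun i => gNorm (A i) with ha
  set p : Fin n → Fin n → ℝ := fun i j => gNorm (Φ i j) with hp
  -- Step 1: expand the pairing as a double sum of gInner's.
  have step1 : oneInner (phiAct Φ A) A
      = ∑ i, ∑ j, gInner (Φ j i * A j - A j * Φ j i) (A i) := by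
    unfold oneInner phiAct gInner
    simp_rw [Finset.sum_mul, Matrix.trace_sum, Finset.mul_sum]
  -- Per-term bound.
  have key : ∀ i j, |gInner (Φ j i * A j - A j * Φ j i) (A i)| ≤ γ * (p j i * a j * a i) := by
    intro i j
    have h1 := PhiAux.abs_gInner_le _ _ (PhiAux.comm_skew (hΦskew j i) (hA j)) (hA i)
    have h2 := hbd (Φ j i) (A j) (hΦskew j i) (hA j)
    calc |gInner (Φ j i * A j - A j * Φ j i) (A i)|
        ≤ gNorm (Φ j i * A j - A j * Φ j i) * gNorm (A i) := h1
      _ ≤ (γ * gNorm (Φ j i) * gNorm (A j)) * gNorm (A i) :=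
          mul_le_mul_of_nonneg_right h2 (PhiAux.gNorm_nonneg _)
      _ = γ * (p j i * a j * a i) := by ring
  have habs : |oneInner (phiAct Φ A) A| ≤ ∑ i, ∑ j, γ * (p j i * a j * a i) := by
    rw [step1]
    calc |∑ i, ∑ j, gInner (Φ j i * A j - A j * Φ j i) (A i)|
        ≤ ∑ i, |∑ j, gInner (Φ j i * A j - A j * Φ j i) (A i)| :=
          Finset.abs_sum_le_sum_abs _ _
      _ ≤ ∑ i, ∑ j, |gInner (Φ j i * A j - A j * Φ j i) (A i)| :=
          Finset.sum_le_sum (fun i _ => Finset.abs_sum_le_sum_abs _ _)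
      _ ≤ ∑ i, ∑ j, γ * (p j i * a j * a i) :=
          Finset.sum_le_sum (fun i _ => Finset.sum_le_sum (fun j _ => key i j))
  -- Diagonal of Φ vanishes.
  have pdiag : ∀ i, p i i = 0 := by
    intro i
    have h2 : (2 : ℝ) • Φ i i = 0 := by
      rw [two_smul]; nth_rewrite 1 [hΦalt i i]; simp
    have h3 : Φ i i = 0 := by
      rcases smul_eq_zero.mp h2 with h | h
      · norm_num at h
      · exact h
    simp [hp, h3, gNorm, gInner]
  set c : Fin n → Fin n → ℝ := fun i j => if i = j then 0 else a i * a j with hc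
  have hc0 : ∀ i j, 0 ≤ c i j := by
    intro i j; by_cases h : i = j <;>
      simp [hc, h, ha, mul_nonneg (ha0 i) (ha0 j)]
  have hterm : ∀ i j, p j i * a j * a i = p j i * c i j := by
    intro i j
    by_cases h : i = j
    · subst h; simp [hc, pdiag]
    · simp only [hc, if_neg h]; ring
  set S : ℝ := ∑ i, a i ^ 2 with hS
  have hS0 : 0 ≤ S := Finset.sum_nonneg fun i _ => sq_nonneg _
  set T : ℝ := twoInner Φ Φ with hT
  have htr : ∀ X : Matrix (Fin m) (Fin m) ℝ, Xᵀ = -X →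
      (X * X).trace = -(2 * gNorm X ^ 2) := by
    intro X hX
    have h1 := PhiAux.gNorm_sq X hX
    unfold gInner at h1
    linarith
  have hTval : T = (1/2) * ∑ i, ∑ j, p i j ^ 2 := by
    rw [hT]; unfold twoInner
    simp_rw [fun i j => htr (Φ i j) (hΦskew i j)]
    rw [show ∀ f : Fin n → Fin n → ℝ, ∑ i, ∑ j, -(2 * f i j) = -(2 * ∑ i, ∑ j, f i j) by
      intro f; simp [Finset.mul_sum]]
    ring
  have hT0 : 0 ≤ T := by
    rw [hTval]
    have : 0 ≤ ∑ i, ∑ j, p i j ^ 2 :=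
      Finset.sum_nonneg fun i _ => Finset.sum_nonneg fun j _ => sq_nonneg _
    linarith
  have hnormA : oneNorm A ^ 2 = S := by
    have h1 : oneInner A A = S := by
      unfold oneInner
      simp_rw [fun i => htr (A i) (hA i)]
      rw [show ∀ f : Fin n → ℝ, ∑ i, -(2 * f i) = -(2 * ∑ i, f i) by
        intro f; simp [Finset.mul_sum]]
      rw [hS]; ring
    rw [oneNorm, h1, Real.sq_sqrt hS0]
  -- Cauchy-Schwarz over pairs.
  set u : ℝ := ∑ z : Fin n × Fin n, p z.2 z.1 * c z.1 z.2 with hu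
  have hu0 : 0 ≤ u :=
    Finset.sum_nonneg fun z _ => mul_nonneg (hp0 _ _) (hc0 _ _)
  have hdouble : ∑ i, ∑ j, γ * (p j i * a j * a i) = γ * u := by
    simp_rw [hterm]
    rw [hu, Fintype.sum_prod_type]
    simp_rw [← Finset.mul_sum]
  have hCS : u ^ 2 ≤ (∑ z : Fin n × Fin n, p z.2 z.1 ^ 2) *
      (∑ z : Fin n × Fin n, c z.1 z.2 ^ 2) := by
    rw [hu]
    exact Finset.sum_mul_sq_le_sq_mul_sq Finset.univ _ _
  have e1 : (∑ z : Fin n × Fin n, p z.2 z.1 ^ 2) = 2 * T := by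
    rw [Fintype.sum_prod_type, hTval, Finset.sum_comm]
    ring
  have e2 : (∑ z : Fin n × Fin n, c z.1 z.2 ^ 2) = S ^ 2 - ∑ i, a i ^ 4 := by
    rw [Fintype.sum_prod_type]
    have h1 : ∀ i j, c i j ^ 2 = a i ^ 2 * a j ^ 2 - (if i = j then a i ^ 4 else 0) := by
      intro i j; by_cases h : i = j
      · subst h; simp [hc]; ring
      · simp only [hc, if_neg h]; ring
    simp_rw [h1, Finset.sum_sub_distrib]
    congr 1
    · rw [hS, sq, Finset.sum_mul_sum]
    · simp
  have hn0 : (0 : ℝ) < n := by exact_mod_cast hn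
  have hn1 : (1 : ℝ) ≤ n := by exact_mod_cast hn
  have hpow : S ^ 2 ≤ (n : ℝ) * ∑ i, a i ^ 4 := by
    have h1 := Finset.sum_mul_sq_le_sq_mul_sq Finset.univ (fun i : Fin n => a i ^ 2)
      (fun _ : Fin n => (1 : ℝ))
    simp only [mul_one, one_pow, Finset.sum_const, Finset.card_univ, Fintype.card_fin,
      nsmul_eq_mul, ← pow_mul] at h1
    rw [hS]
    calc (∑ i, a i ^ 2) ^ 2 ≤ (∑ i, a i ^ (2 * 2)) * n := h1
      _ = (n : ℝ) * ∑ i, a i ^ 4 := by norm_num; ring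
  have hub : u ^ 2 ≤ 2 * T * (S ^ 2 * (((n : ℝ) - 1) / n)) := by
    have h4 : S ^ 2 / n ≤ ∑ i, a i ^ 4 := by
      rw [div_le_iff₀ hn0]; linarith [hpow]
    calc u ^ 2 ≤ (2 * T) * (S ^ 2 - ∑ i, a i ^ 4) := by rw [e1, e2] at hCS; exact hCS
      _ ≤ (2 * T) * (S ^ 2 - S ^ 2 / n) := by
          apply mul_le_mul_of_nonneg_left _ (by linarith)
          linarith
      _ = 2 * T * (S ^ 2 * (((n : ℝ) - 1) / n)) := by
          have hne : (n : ℝ) ≠ 0 := ne_of_gt hn0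
          have hEq : S ^ 2 - S ^ 2 / (n : ℝ) = S ^ 2 * (((n : ℝ) - 1) / n) := by
            field_simp
          rw [hEq]
  have hfrac : 0 ≤ ((n : ℝ) - 1) / (2 * n) := by
    apply div_nonneg (by linarith) (by linarith)
  set v : ℝ := 2 * Real.sqrt (((n : ℝ) - 1) / (2 * n)) * Real.sqrt T * S with hv
  have hv0 : 0 ≤ v := by
    rw [hv]
    exact mul_nonneg (mul_nonneg (mul_nonneg (by norm_num) (Real.sqrt_nonneg _))
      (Real.sqrt_nonneg _)) hS0
  have hv2 : v ^ 2 = 4 * (((n : ℝ) - 1) / (2 * n)) * T * S ^ 2 := by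
    rw [hv]
    rw [show (2 * Real.sqrt (((n : ℝ) - 1) / (2 * n)) * Real.sqrt T * S) ^ 2
        = 4 * Real.sqrt (((n : ℝ) - 1) / (2 * n)) ^ 2 * Real.sqrt T ^ 2 * S ^ 2 by ring]
    rw [Real.sq_sqrt hfrac, Real.sq_sqrt hT0]
  have hle : u ≤ v := by
    have hsq : u ^ 2 ≤ v ^ 2 := by
      rw [hv2]
      calc u ^ 2 ≤ 2 * T * (S ^ 2 * (((n : ℝ) - 1) / n)) := hub
        _ = 4 * (((n : ℝ) - 1) / (2 * n)) * T * S ^ 2 := by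
            have hne : (n : ℝ) ≠ 0 := ne_of_gt hn0
            field_simp
            ring
    calc u = Real.sqrt (u ^ 2) := (Real.sqrt_sq hu0).symm
      _ ≤ Real.sqrt (v ^ 2) := Real.sqrt_le_sqrt hsq
      _ = v := Real.sqrt_sq hv0
  have htwoNorm : twoNorm Φ = Real.sqrt T := rfl
  calc |oneInner (phiAct Φ A) A| ≤ ∑ i, ∑ j, γ * (p j i * a j * a i) := habs
    _ = γ * u := hdouble
    _ ≤ γ * v := mul_le_mul_of_nonneg_left hle hγ
    _ = 2 * γ * Real.sqrt (((n : ℝ) - 1) / (2 * n)) * twoNorm Φ * oneNorm A ^ 2 := by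
        rw [htwoNorm, hnormA, hv]; ring
end

section
/- Let T be a real symmetric n×n matrix with tr(T) = 0. Then for every vector v ∈ ℝⁿ, |⟨Tv, v⟩| ≤ √((n−1)/n)·‖T‖_F·|v|², where ‖T‖_F = (Σ_{i,j} T_{ij}²)^{1/2} is the Frobenius norm, ⟨·,·⟩ is the standard inner product on ℝⁿ, and |v| is the Euclidean norm. -/
open Matrix

/-- For a real symmetric trace-free `n×n` matrix `T` and `v ∈ ℝⁿ`,
`|⟨Tv, v⟩| ≤ √((n−1)/n)·‖T‖_F·|v|²`, where `‖T‖_F` is the Frobenius norm. -/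
theorem tracefree_quadratic_form_bound (n : ℕ) (hn : 1 ≤ n)
    (T : Matrix (Fin n) (Fin n) ℝ) (hsymm : Tᵀ = T) (htr : T.trace = 0)
    (v : Fin n → ℝ) :
    |∑ i, T.mulVec v i * v i| ≤
      Real.sqrt (((n : ℝ) - 1) / n) * Real.sqrt (∑ i, ∑ j, T i j ^ 2) *
        (∑ i, v i ^ 2) := by
  have hn0 : (0:ℝ) < n := by exact_mod_cast hn
  set S := ∑ i, v i ^ 2 with hS
  have hS0 : 0 ≤ S := Finset.sum_nonneg fun i _ => sq_nonneg _
  set M : Matrix (Fin n) (Fin n) ℝ :=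
    fun i j => v i * v j - (if i = j then S / n else 0) with hM
  have htr' : ∑ i, T i i = 0 := htr
  -- step 1: quadratic form equals Frobenius pairing with M
  have h1 : ∑ i, T.mulVec v i * v i = ∑ p : Fin n × Fin n, T p.1 p.2 * M p.1 p.2 := by
    rw [Fintype.sum_prod_type]
    simp only [hM, Matrix.mulVec, dotProduct, Finset.sum_mul, mul_sub, mul_ite, mul_zero,
      Finset.sum_sub_distrib, Finset.sum_ite_eq, Finset.mem_univ, if_true]
    rw [← Finset.sum_mul, htr']
    ring_nf
    exact Finset.sum_congr rfl fun i _ => Finset.sum_congr rfl fun j _ => by ring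
  -- step 2: Frobenius norm of M squared
  have h2 : ∑ p : Fin n × Fin n, M p.1 p.2 ^ 2 = (((n:ℝ) - 1) / n) * S ^ 2 := by
    rw [Fintype.sum_prod_type]
    have : ∀ i j : Fin n, M i j ^ 2 =
        v i ^ 2 * v j ^ 2 - 2 * (v i * v j) * (if i = j then S / n else 0)
          + (if i = j then (S/n)^2 else 0) := by
      intro i j
      by_cases h : i = j <;> simp [hM, h] <;> ring
    simp only [this, Finset.sum_add_distrib, Finset.sum_sub_distrib, mul_ite, mul_zero,
      Finset.sum_ite_eq, Finset.mem_univ, if_true, Finset.sum_const, Finset.card_univ,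
      Fintype.card_fin, nsmul_eq_mul]
    rw [← Finset.sum_mul, ← Finset.mul_sum]
    have h3 : ∑ i, v i * v i * (S / n) = S * S / n := by
      rw [← Finset.sum_mul]
      have : ∑ i, v i * v i = S := by rw [hS]; exact Finset.sum_congr rfl fun i _ => (sq (v i)).symm ▸ by ring
      rw [this]; ring
    have h4 : ∑ i : Fin n, v i ^ 2 * ∑ j, v j ^ 2 = S * S := by
      rw [← Finset.sum_mul]
    have h5 : ∑ i, v i * v i = S := by
      rw [hS]; exact Finset.sum_congr rfl fun i _ => by ring
    simp_rw [← Finset.mul_sum]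
    rw [h4, h5]
    field_simp
    ring
  -- step 3: Cauchy–Schwarz
  have hn1 : (1:ℝ) ≤ n := by exact_mod_cast hn
  have hfrac : 0 ≤ ((n:ℝ) - 1) / n := div_nonneg (by linarith) (le_of_lt hn0)
  have hT2 : ∑ p : Fin n × Fin n, T p.1 p.2 ^ 2 = ∑ i, ∑ j, T i j ^ 2 :=
    Fintype.sum_prod_type _
  have hTnn : 0 ≤ ∑ p : Fin n × Fin n, T p.1 p.2 ^ 2 :=
    Finset.sum_nonneg fun p _ => sq_nonneg _
  have hcs := Finset.sum_mul_sq_le_sq_mul_sq Finset.univ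
    (fun p : Fin n × Fin n => T p.1 p.2) (fun p => M p.1 p.2)
  rw [h1]
  calc |∑ p : Fin n × Fin n, T p.1 p.2 * M p.1 p.2|
      = Real.sqrt ((∑ p : Fin n × Fin n, T p.1 p.2 * M p.1 p.2) ^ 2) :=
        (Real.sqrt_sq_eq_abs _).symm
    _ ≤ Real.sqrt ((∑ p : Fin n × Fin n, T p.1 p.2 ^ 2) *
          ∑ p : Fin n × Fin n, M p.1 p.2 ^ 2) := Real.sqrt_le_sqrt hcs
    _ = Real.sqrt (∑ i, ∑ j, T i j ^ 2) * (Real.sqrt (((n:ℝ) - 1) / n) * S) := by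
        rw [Real.sqrt_mul hTnn, hT2, h2, Real.sqrt_mul hfrac, Real.sqrt_sq hS0]
    _ = Real.sqrt (((n:ℝ) - 1) / n) * Real.sqrt (∑ i, ∑ j, T i j ^ 2) * S := by ring
end

section
/- Let K > 0 and let h : (0,∞) → ℝ be a differentiable function such that h(t) > 0 and h'(t) ≤ −K·h(t)^{3/2} for all t > 0. Then h(t) ≤ 4/(K²·t²) for all t > 0. -/
/-- If `h > 0` is differentiable on `(0,∞)` with `h' ≤ −K·h^{3/2}` there (`K > 0`),
then `h(t) ≤ 4/(K²·t²)` for all `t > 0`. -/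
theorem ode_decay_bound (K : ℝ) (hK : 0 < K) (h h' : ℝ → ℝ)
    (hderiv : ∀ t : ℝ, 0 < t → HasDerivAt h (h' t) t)
    (hpos : ∀ t : ℝ, 0 < t → 0 < h t)
    (hineq : ∀ t : ℝ, 0 < t → h' t ≤ -K * h t ^ (3/2 : ℝ)) :
    ∀ t : ℝ, 0 < t → h t ≤ 4 / (K ^ 2 * t ^ 2) := by
  set g : ℝ → ℝ := fun x => h x ^ (-(1/2) : ℝ) with hg
  have hgderiv : ∀ x : ℝ, 0 < x →
      HasDerivAt g (h' x * (-(1/2)) * h x ^ (-(3/2) : ℝ)) x := by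
    intro x hx
    have := (hderiv x hx).rpow_const (p := (-(1/2) : ℝ)) (Or.inl (hpos x hx).ne')
    convert this using 2
    norm_num
  have hgd : ∀ x : ℝ, 0 < x → K / 2 ≤ deriv g x := by
    intro x hx
    rw [(hgderiv x hx).deriv]
    have h1 : (0:ℝ) < h x ^ (-(3/2) : ℝ) := Real.rpow_pos_of_pos (hpos x hx) _
    have h2 : K * h x ^ (3/2 : ℝ) ≤ -h' x := by linarith [hineq x hx]
    have h3 : h x ^ (3/2 : ℝ) * h x ^ (-(3/2) : ℝ) = 1 := by
      rw [← Real.rpow_add (hpos x hx)]; norm_num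
    have h4 := mul_le_mul_of_nonneg_right h2 h1.le
    rw [mul_assoc, h3, mul_one] at h4
    have h5 : h' x * (-(1/2)) * h x ^ (-(3/2) : ℝ)
        = (-h' x * h x ^ (-(3/2) : ℝ)) / 2 := by ring
    rw [h5]; linarith
  intro t ht
  have key : ∀ ε ∈ Set.Ioo (0:ℝ) t, K / 2 * (t - ε) ≤ g t - g ε := by
    intro ε hε
    have hconv : Convex ℝ (Set.Icc ε t) := convex_Icc _ _
    have hcont : ContinuousOn g (Set.Icc ε t) := fun x hx =>
      ((hgderiv x (lt_of_lt_of_le hε.1 hx.1)).continuousAt).continuousWithinAt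
    have hdiff : DifferentiableOn ℝ g (interior (Set.Icc ε t)) := by
      intro x hx
      rw [interior_Icc] at hx
      exact ((hgderiv x (hε.1.trans hx.1)).differentiableAt).differentiableWithinAt
    have hge : ∀ x ∈ interior (Set.Icc ε t), K / 2 ≤ deriv g x := by
      intro x hx; rw [interior_Icc] at hx; exact hgd x (hε.1.trans hx.1)
    exact hconv.mul_sub_le_image_sub_of_le_deriv hcont hdiff hge ε
      (Set.left_mem_Icc.2 hε.2.le) t (Set.right_mem_Icc.2 hε.2.le) hε.2.le
  have hgt : K / 2 * t ≤ g t := by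
    have hlim : Filter.Tendsto (fun ε : ℝ => K / 2 * (t - ε)) (nhdsWithin 0 (Set.Ioi 0))
        (nhds (K / 2 * t)) := by
      have : Filter.Tendsto (fun ε : ℝ => K / 2 * (t - ε)) (nhds 0)
          (nhds (K / 2 * (t - 0))) :=
        (tendsto_const_nhds.sub Filter.tendsto_id).const_mul _
      simpa using this.mono_left nhdsWithin_le_nhds
    refine le_of_tendsto hlim ?_
    filter_upwards [Ioo_mem_nhdsGT_of_mem (Set.mem_Ico.2 ⟨le_refl 0, ht⟩)] with ε hε
    have hk := key ε hε
    have hgε : 0 < g ε := Real.rpow_pos_of_pos (hpos ε hε.1) _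
    linarith
  have hsq : h t * g t ^ 2 = 1 := by
    have hp := hpos t ht
    have hgs : g t ^ 2 = h t ^ (-1 : ℝ) := by
      rw [hg]; simp only
      rw [sq, ← Real.rpow_add hp]; norm_num
    rw [hgs, mul_comm, ← Real.rpow_add_one hp.ne']
    norm_num
  have hK2 : (0:ℝ) < K ^ 2 * t ^ 2 := by positivity
  have hg2 : (K / 2 * t) ^ 2 ≤ g t ^ 2 := by
    apply pow_le_pow_left₀ (by positivity) hgt
  have hmul := mul_le_mul_of_nonneg_left hg2 (hpos t ht).le
  rw [hsq] at hmul
  rw [le_div_iff₀ hK2]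
  nlinarith [hpos t ht]
end

section
/- Let C > 0 and let (μ_i)_{i≥1} be a nondecreasing sequence of positive real numbers such that for every t > 0 the series Σ_{i=1}^∞ exp(−2·μ_i·t) converges and satisfies Σ_{i=1}^∞ exp(−2·μ_i·t) ≤ C·t^{−2}. Then for every integer k ≥ 1, k ≤ e²·C·μ_k², where e is Euler's number. -/
/-- If `(μᵢ)_{i≥1}` is a nondecreasing sequence of positive reals with
`Σ_{i=1}^∞ exp(−2μᵢt) ≤ C·t⁻²` (the series converging) for all `t > 0`, then for
every `k ≥ 1`, `k ≤ e²·C·μₖ²`. -/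
theorem eigenvalue_lower_bound (C : ℝ) (hC : 0 < C) (μ : ℕ → ℝ)
    (hpos : ∀ i, 1 ≤ i → 0 < μ i)
    (hmono : ∀ i j, 1 ≤ i → i ≤ j → μ i ≤ μ j)
    (hsum : ∀ t : ℝ, 0 < t → Summable (fun i : ℕ => Real.exp (-2 * μ (i + 1) * t)))
    (hbound : ∀ t : ℝ, 0 < t →
      (∑' i : ℕ, Real.exp (-2 * μ (i + 1) * t)) ≤ C / t ^ 2) :
    ∀ k : ℕ, 1 ≤ k → (k : ℝ) ≤ Real.exp 1 ^ 2 * C * μ k ^ 2 := by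
  intro k hk
  have hμk : 0 < μ k := hpos k hk
  set t : ℝ := (μ k)⁻¹ with ht
  have htpos : 0 < t := inv_pos.mpr hμk
  have hterm : ∀ i ∈ Finset.range k, Real.exp (-2) ≤ Real.exp (-2 * μ (i + 1) * t) := by
    intro i hi
    apply Real.exp_le_exp.mpr
    have hle : μ (i + 1) ≤ μ k := hmono (i + 1) k (Nat.le_add_left 1 i)
      (Nat.succ_le_of_lt (Finset.mem_range.mp hi))
    have h1 : μ (i + 1) * t ≤ 1 := by
      rw [ht]
      rw [mul_inv_le_iff₀ hμk, one_mul]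
      exact hle
    nlinarith
  have hsumk : (k : ℝ) * Real.exp (-2) ≤ ∑ i ∈ Finset.range k, Real.exp (-2 * μ (i + 1) * t) := by
    calc (k : ℝ) * Real.exp (-2) = ∑ _i ∈ Finset.range k, Real.exp (-2) := by
          simp [mul_comm]
      _ ≤ _ := Finset.sum_le_sum hterm
  have hpartial : ∑ i ∈ Finset.range k, Real.exp (-2 * μ (i + 1) * t)
      ≤ ∑' i : ℕ, Real.exp (-2 * μ (i + 1) * t) :=
    Summable.sum_le_tsum _ (fun i _ => (Real.exp_pos _).le) (hsum t htpos)
  have hb := hbound t htpos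
  have hC' : C / t ^ 2 = C * μ k ^ 2 := by
    rw [ht]; field_simp
  have hkey : (k : ℝ) * Real.exp (-2) ≤ C * μ k ^ 2 := by
    rw [← hC']; linarith
  have he : Real.exp 1 ^ 2 * Real.exp (-2) = 1 := by
    rw [← Real.exp_nat_mul]
    rw [← Real.exp_add]
    norm_num
  have hepos : 0 < Real.exp (-2) := Real.exp_pos _
  calc (k : ℝ) = Real.exp 1 ^ 2 * ((k : ℝ) * Real.exp (-2)) := by
        rw [show Real.exp 1 ^ 2 * ((k : ℝ) * Real.exp (-2))
          = (Real.exp 1 ^ 2 * Real.exp (-2)) * k by ring, he, one_mul]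
    _ ≤ Real.exp 1 ^ 2 * (C * μ k ^ 2) := by
        apply mul_le_mul_of_nonneg_left hkey (by positivity)
    _ = Real.exp 1 ^ 2 * C * μ k ^ 2 := by ring
end

section
/- Let (X, μ) be a σ-finite measure space, let H : X × X → [0,∞) be measurable with respect to the product σ-algebra, and let V : X → [0,∞) be measurable. Then (with all integrals interpreted as Lebesgue integrals with values in [0,∞]): ∫_X ∫_X H(x,y)²·V(x)·V(y) dμ(y) dμ(x) ≤ ( ∫_X V(x)·( ∫_X H(x,y)⁴ dμ(y) )^{1/2} dμ(x) )^{2/3} · ( ∫_X V(x)·( ∫_X H(x,y)·V(y)^{3/2} dμ(y) )² dμ(x) )^{1/3}. -/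
open MeasureTheory
open scoped ENNReal NNReal

/-- The double-Hölder estimate for a nonnegative kernel `H` and weight `V` on a
σ-finite measure space:
`∫∫ H²·V(x)·V(y) ≤ (∫ V(x)·(∫ H⁴ dy)^{1/2} dx)^{2/3} · (∫ V(x)·(∫ H·V^{3/2} dy)² dx)^{1/3}`. -/
theorem kernel_double_holder {X : Type*} [MeasurableSpace X] (μ : Measure X)
    [SigmaFinite μ] (H : X × X → ℝ≥0) (V : X → ℝ≥0)
    (hH : Measurable H) (hV : Measurable V) :
    ∫⁻ x, ∫⁻ y, (H (x, y) : ℝ≥0∞) ^ 2 * (V x : ℝ≥0∞) * (V y : ℝ≥0∞) ∂μ ∂μ ≤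
      (∫⁻ x, (V x : ℝ≥0∞) * (∫⁻ y, (H (x, y) : ℝ≥0∞) ^ 4 ∂μ) ^ (1/2 : ℝ) ∂μ) ^ (2/3 : ℝ) *
      (∫⁻ x, (V x : ℝ≥0∞) *
          (∫⁻ y, (H (x, y) : ℝ≥0∞) * (V y : ℝ≥0∞) ^ (3/2 : ℝ) ∂μ) ^ 2 ∂μ) ^ (1/3 : ℝ) := by
  set h : X × X → ℝ≥0∞ := fun p => (H p : ℝ≥0∞) with hh
  set v : X → ℝ≥0∞ := fun x => (V x : ℝ≥0∞) with hv
  have hmh : Measurable h := hH.coe_nnreal_ennreal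
  have hmv : Measurable v := hV.coe_nnreal_ennreal
  set A : X → ℝ≥0∞ := fun x => ∫⁻ y, h (x, y) ^ 4 ∂μ with hA
  set B : X → ℝ≥0∞ := fun x => ∫⁻ y, h (x, y) * v y ^ (3/2 : ℝ) ∂μ with hB
  have hmA : Measurable A := (hmh.pow_const 4).lintegral_prod_right'
  have hmB : Measurable B :=
    (hmh.mul ((hmv.comp measurable_snd).pow_const _)).lintegral_prod_right'
  have hpq : Real.HolderConjugate 3 (3/2) := by constructor <;> norm_num
  -- pointwise identity for the inner Hölder
  have key1 : ∀ a b : ℝ≥0∞, a ^ 2 * b =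
      a ^ (4/3 : ℝ) * (a * b ^ (3/2 : ℝ)) ^ (2/3 : ℝ) := by
    intro a b
    rw [ENNReal.mul_rpow_of_nonneg _ _ (by norm_num : (0:ℝ) ≤ 2/3),
      ← ENNReal.rpow_mul b, show ((3/2) * (2/3) : ℝ) = 1 by norm_num, ENNReal.rpow_one,
      ← mul_assoc, ← ENNReal.rpow_add_of_nonneg _ _ (by norm_num) (by norm_num),
      show ((4/3 : ℝ) + 2/3) = ((2 : ℕ) : ℝ) by norm_num, ENNReal.rpow_natCast]
  -- pointwise identity for the outer Hölder
  have key2 : ∀ a b c : ℝ≥0∞, a * (b ^ (1/3 : ℝ) * c ^ (2/3 : ℝ)) =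
      (a * b ^ (1/2 : ℝ)) ^ (2/3 : ℝ) * (a * c ^ 2) ^ (1/3 : ℝ) := by
    intro a b c
    rw [ENNReal.mul_rpow_of_nonneg _ _ (by norm_num : (0:ℝ) ≤ 2/3),
      ENNReal.mul_rpow_of_nonneg _ _ (by norm_num : (0:ℝ) ≤ 1/3),
      ← ENNReal.rpow_natCast c 2, ← ENNReal.rpow_mul b, ← ENNReal.rpow_mul c,
      show ((1/2) * (2/3) : ℝ) = 1/3 by norm_num,
      show (((2:ℕ):ℝ) * (1/3)) = 2/3 by norm_num]
    ring_nf
    conv_rhs => rw [mul_assoc, ← ENNReal.rpow_add_of_nonneg _ _ (by norm_num) (by norm_num),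
      show ((2/3 : ℝ) + 1/3) = 1 by norm_num, ENNReal.rpow_one]
    ring
  -- Step 1: inner Hölder
  have step1 : ∀ x, (∫⁻ y, h (x, y) ^ 2 * v x * v y ∂μ) ≤
      v x * (A x ^ (1/3 : ℝ) * B x ^ (2/3 : ℝ)) := by
    intro x
    have h1 : (∫⁻ y, h (x, y) ^ 2 * v y ∂μ) ≤ A x ^ (1/3 : ℝ) * B x ^ (2/3 : ℝ) := by
      have hold := ENNReal.lintegral_mul_le_Lp_mul_Lq μ hpq
        (f := fun y => h (x, y) ^ (4/3 : ℝ)) (g := fun y => (h (x, y) * v y ^ (3/2 : ℝ)) ^ (2/3 : ℝ))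
        (((hmh.comp measurable_prodMk_left).pow_const _).aemeasurable)
        (((hmh.comp measurable_prodMk_left).mul (hmv.pow_const _)).pow_const _).aemeasurable
      calc (∫⁻ y, h (x, y) ^ 2 * v y ∂μ)
          = ∫⁻ y, ((fun y => h (x, y) ^ (4/3 : ℝ)) *
              (fun y => (h (x, y) * v y ^ (3/2 : ℝ)) ^ (2/3 : ℝ))) y ∂μ :=
            lintegral_congr fun y => key1 _ _
        _ ≤ (∫⁻ y, (h (x, y) ^ (4/3 : ℝ)) ^ (3 : ℝ) ∂μ) ^ (1/(3:ℝ)) *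
            (∫⁻ y, ((h (x, y) * v y ^ (3/2 : ℝ)) ^ (2/3 : ℝ)) ^ ((3/2 : ℝ)) ∂μ) ^ (1/(3/2:ℝ)) :=
              hold
        _ = A x ^ (1/3 : ℝ) * B x ^ (2/3 : ℝ) := by
            congr 1
            · congr 1
              refine lintegral_congr fun y => ?_
              rw [← ENNReal.rpow_mul, show ((4/3) * 3 : ℝ) = ((4:ℕ):ℝ) by norm_num,
                ENNReal.rpow_natCast]
            · rw [show (1/(3/2:ℝ)) = (2/3 : ℝ) by norm_num]
              congr 1
              refine lintegral_congr fun y => ?_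
              rw [← ENNReal.rpow_mul, show ((2/3) * (3/2) : ℝ) = 1 by norm_num,
                ENNReal.rpow_one]
    calc (∫⁻ y, h (x, y) ^ 2 * v x * v y ∂μ)
        = ∫⁻ y, v x * (h (x, y) ^ 2 * v y) ∂μ := lintegral_congr fun y => by ring
      _ = v x * ∫⁻ y, h (x, y) ^ 2 * v y ∂μ :=
          lintegral_const_mul' _ _ ENNReal.coe_ne_top
      _ ≤ _ := mul_le_mul_right h1 _
  -- Step 2: outer Hölder
  have hpq2 : Real.HolderConjugate (3/2) 3 := hpq.symm
  calc ∫⁻ x, ∫⁻ y, h (x, y) ^ 2 * v x * v y ∂μ ∂μ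
      ≤ ∫⁻ x, v x * (A x ^ (1/3 : ℝ) * B x ^ (2/3 : ℝ)) ∂μ :=
        lintegral_mono step1
    _ = ∫⁻ x, ((fun x => (v x * A x ^ (1/2 : ℝ)) ^ (2/3 : ℝ)) *
          (fun x => (v x * B x ^ 2) ^ (1/3 : ℝ))) x ∂μ :=
        lintegral_congr fun x => key2 _ _ _
    _ ≤ (∫⁻ x, ((v x * A x ^ (1/2 : ℝ)) ^ (2/3 : ℝ)) ^ (3/2 : ℝ) ∂μ) ^ (1/(3/2:ℝ)) *
        (∫⁻ x, ((v x * B x ^ 2) ^ (1/3 : ℝ)) ^ (3 : ℝ) ∂μ) ^ (1/(3:ℝ)) := by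
        refine ENNReal.lintegral_mul_le_Lp_mul_Lq μ hpq2 ?_ ?_
        · exact ((hmv.mul (hmA.pow_const _)).pow_const _).aemeasurable
        · exact ((hmv.mul (hmB.pow_const 2)).pow_const _).aemeasurable
    _ = _ := by
        congr 1
        · rw [show (1/(3/2:ℝ)) = (2/3 : ℝ) by norm_num]
          congr 1
          refine lintegral_congr fun x => ?_
          rw [← ENNReal.rpow_mul, show ((2/3) * (3/2) : ℝ) = 1 by norm_num, ENNReal.rpow_one]
        · rw [show (1/(3:ℝ)) = (1/3 : ℝ) by norm_num]
          congr 1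
          refine lintegral_congr fun x => ?_
          rw [← ENNReal.rpow_mul, show ((1/3) * 3 : ℝ) = 1 by norm_num, ENNReal.rpow_one]
end
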